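/- arXiv:2411.01857 — 10 statements merged into one kernel-verified Lean document; each statement's English description precedes it below -/
import Mathlib

section
/- For every n ≥ 0, every i ∈ Fin (n+1), and every permutation π of Fin (n+1), there exists a permutation π' of Fin (n+2) such that σ^i ∘ π' = π ∘ σ^{π⁻¹(i)} as maps Fin (n+2) → Fin (n+1), where for k ∈ Fin (n+1), σ^k : Fin (n+2) → Fin (n+1) denotes the codegeneracy map, i.e. the monotone surjection that takes the value k twice. -/
/-- For every `i` and every permutation `π` of `Fin (n+1)`, there is a permutation `π'`
of `Fin (n+2)` with `σ^i ∘ π' = π ∘ σ^{π⁻¹ i}`, where the codegeneracy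
`σ^k : Fin (n+2) → Fin (n+1)` is `Fin.predAbove k`. -/
theorem exists_perm_codegeneracy_compat (n : ℕ) (i : Fin (n + 1))
    (π : Equiv.Perm (Fin (n + 1))) :
    ∃ π' : Equiv.Perm (Fin (n + 2)),
      ∀ k : Fin (n + 2), Fin.predAbove i (π' k) = π (Fin.predAbove (π.symm i) k) := by
  set j : Fin (n + 1) := π.symm i with hj
  refine ⟨(finSuccEquiv' j.castSucc).trans
    ((π.optionCongr).trans (finSuccEquiv' i.castSucc).symm), fun k => ?_⟩
  by_cases hk : k = j.castSucc
  · subst hk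
    simp [Equiv.optionCongr, hj]
  · obtain ⟨m, rfl⟩ := Fin.exists_succAbove_eq hk
    simp [finSuccEquiv'_succAbove, finSuccEquiv'_symm_some, Fin.predAbove_succAbove,
      Equiv.optionCongr]
end

section
/- Let ν be a distance matrix norm, X a metric space, x₀, …, x_n ∈ X, and 0 ≤ i ≤ n. Then w_ν(x₀, …, x_n) ≤ w_ν(x₀, …, x_i) + w_ν(x_i, …, x_n). -/
noncomputable section

open scoped BigOperators

/-- `D` is a distance matrix (a pseudometric on `Fin (n+1)`). -/
def IsDistMatrix {n : ℕ} (D : Fin (n + 1) → Fin (n + 1) → ℝ) : Prop :=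
  (∀ i, D i i = 0) ∧ (∀ i j, 0 ≤ D i j) ∧ (∀ i j, D i j = D j i) ∧
    ∀ i j k, D i k ≤ D i j + D j k

/-- The matrix `E_n` with all off-diagonal entries equal to `1`. -/
def matE (n : ℕ) : Fin (n + 1) → Fin (n + 1) → ℝ := fun i j => if i = j then 0 else 1

/-- A distance matrix norm: a family of maps `ν n : Dist_[n] → ℝ` satisfying
nonnegativity, (1) homogeneity, (2) subadditivity, (3) monotonicity, (4) normalization
and (5) simpliciality (faces decrease, degeneracies preserve).  Faces are given by
precomposition with `Fin.succAbove i` (the monotone injection skipping `i`) and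
degeneracies by precomposition with `Fin.predAbove i` (the monotone surjection taking
the value `i` twice). -/
structure IsDistMatrixNorm (ν : ∀ n : ℕ, (Fin (n + 1) → Fin (n + 1) → ℝ) → ℝ) : Prop where
  nonneg : ∀ (n : ℕ) (D : Fin (n + 1) → Fin (n + 1) → ℝ), IsDistMatrix D → 0 ≤ ν n D
  smul_eq : ∀ (n : ℕ) (α : ℝ), 0 ≤ α → ∀ D : Fin (n + 1) → Fin (n + 1) → ℝ, IsDistMatrix D →
    ν n (fun i j => α * D i j) = α * ν n D
  add_le : ∀ (n : ℕ) (D D' : Fin (n + 1) → Fin (n + 1) → ℝ), IsDistMatrix D → IsDistMatrix D' →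
    ν n (fun i j => D i j + D' i j) ≤ ν n D + ν n D'
  mono : ∀ (n : ℕ) (D D' : Fin (n + 1) → Fin (n + 1) → ℝ), IsDistMatrix D → IsDistMatrix D' →
    (∀ i j, D i j ≤ D' i j) → ν n D ≤ ν n D'
  normalized : ν 1 (matE 1) = 1
  face_le : ∀ (n : ℕ) (D : Fin (n + 2) → Fin (n + 2) → ℝ), IsDistMatrix D → ∀ i : Fin (n + 2),
    ν n (fun k l => D (i.succAbove k) (i.succAbove l)) ≤ ν (n + 1) D
  degen_eq : ∀ (n : ℕ) (D : Fin (n + 1) → Fin (n + 1) → ℝ), IsDistMatrix D → ∀ i : Fin (n + 1),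
    ν (n + 1) (fun k l => D (i.predAbove k) (i.predAbove l)) = ν n D

/-- The constants `C_n(ν) = ν(E_n)`. -/
def matC (ν : ∀ n : ℕ, (Fin (n + 1) → Fin (n + 1) → ℝ) → ℝ) (n : ℕ) : ℝ :=
  ν n (matE n)

/-- The `ν`-weight of a tuple of points in a (pseudo)metric space. -/
def wt (ν : ∀ n : ℕ, (Fin (n + 1) → Fin (n + 1) → ℝ) → ℝ) {X : Type*} [PseudoMetricSpace X]
    {n : ℕ} (x : Fin (n + 1) → X) : ℝ :=
  ν n fun i j => dist (x i) (x j)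

/- ########## auxiliary lemmas ########## -/

lemma distMatrix_isDist {X : Type*} [PseudoMetricSpace X] {n : ℕ} (x : Fin (n+1) → X) :
    IsDistMatrix (fun i j => dist (x i) (x j)) :=
  ⟨fun i => dist_self _, fun _ _ => dist_nonneg, fun _ _ => dist_comm _ _,
   fun _ _ _ => dist_triangle _ _ _⟩

lemma predAbove_last_val {m : ℕ} (k : Fin (m+2)) : ((Fin.last m).predAbove k).1 = min k.1 m := by
  rcases k with ⟨v, hv⟩
  simp [Fin.predAbove, Fin.lt_def]
  split_ifs <;> simp_all <;> omega

lemma predAbove_zero_val {m : ℕ} (k : Fin (m+2)) : ((0 : Fin (m+1)).predAbove k).1 = k.1 - 1 := by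
  rcases k with ⟨v, hv⟩
  simp [Fin.predAbove, Fin.lt_def]
  split_ifs <;> simp_all <;> omega

lemma wt_comp_predAbove (ν : ∀ n : ℕ, (Fin (n + 1) → Fin (n + 1) → ℝ) → ℝ)
    (hν : IsDistMatrixNorm ν) {X : Type*} [PseudoMetricSpace X] {m : ℕ}
    (x : Fin (m+1) → X) (p : Fin (m+1)) :
    wt ν (fun k : Fin (m+2) => x (p.predAbove k)) = wt ν x :=
  hν.degen_eq m _ (distMatrix_isDist x) p

lemma wt_clampTop (ν : ∀ n : ℕ, (Fin (n + 1) → Fin (n + 1) → ℝ) → ℝ)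
    (hν : IsDistMatrixNorm ν) {X : Type*} [PseudoMetricSpace X] {i : ℕ}
    (x' : Fin (i+1) → X) :
    ∀ m, i ≤ m → wt ν (fun k : Fin (m+1) => x' ⟨min k.1 i, by omega⟩) = wt ν x' := by
  intro m hm
  induction m, hm using Nat.le_induction with
  | base =>
    congr 1
    funext k
    congr 1
    exact Fin.ext (by simp; omega)
  | succ m hm IH =>
    have h : (fun k : Fin (m+1+1) => x' ⟨min k.1 i, by omega⟩)
        = fun k : Fin (m+2) =>
            (fun l : Fin (m+1) => x' ⟨min l.1 i, by omega⟩) ((Fin.last m).predAbove k) := by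
      funext k
      congr 1
      exact Fin.ext (by simp [predAbove_last_val]; omega)
    rw [h]
    exact (wt_comp_predAbove ν hν _ (Fin.last m)).trans IH

lemma wt_clampBot (ν : ∀ n : ℕ, (Fin (n + 1) → Fin (n + 1) → ℝ) → ℝ)
    (hν : IsDistMatrixNorm ν) {X : Type*} [PseudoMetricSpace X] {j : ℕ}
    (x'' : Fin (j+1) → X) :
    ∀ m, j ≤ m → wt ν (fun k : Fin (m+1) => x'' ⟨k.1 - (m - j), by omega⟩) = wt ν x'' := by
  intro m hm
  induction m, hm using Nat.le_induction with
  | base =>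
    congr 1
    funext k
    congr 1
    exact Fin.ext (by simp)
  | succ m hm IH =>
    have h : (fun k : Fin (m+1+1) => x'' ⟨k.1 - (m+1-j), by omega⟩)
        = fun k : Fin (m+2) =>
            (fun l : Fin (m+1) => x'' ⟨l.1 - (m-j), by omega⟩) ((0 : Fin (m+1)).predAbove k) := by
      funext k
      congr 1
      exact Fin.ext (by simp [predAbove_zero_val]; omega)
    rw [h]
    exact (wt_comp_predAbove ν hν _ (0 : Fin (m+1))).trans IH

lemma dist_le_clamp {X : Type*} [PseudoMetricSpace X] {n : ℕ} (x : Fin (n+1) → X)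
    (i : ℕ) (k l a b c d : Fin (n+1)) (ha : a.1 = min k.1 i) (hb : b.1 = min l.1 i)
    (hc : c.1 = max k.1 i) (hd : d.1 = max l.1 i) :
    dist (x k) (x l) ≤ dist (x a) (x b) + dist (x c) (x d) := by
  rcases le_total k.1 i with hk | hk <;> rcases le_total l.1 i with hl | hl
  · rw [show a = k from Fin.ext (by omega), show b = l from Fin.ext (by omega),
      show c = d from Fin.ext (by omega), dist_self, add_zero]
  · rw [show a = k from Fin.ext (by omega), show b = c from Fin.ext (by omega),
      show d = l from Fin.ext (by omega)]
    exact dist_triangle _ _ _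
  · rw [show b = l from Fin.ext (by omega), show c = k from Fin.ext (by omega),
      show a = d from Fin.ext (by omega)]
    have h1 := dist_triangle (x k) (x d) (x l)
    have h2 := dist_comm (x d) (x l)
    linarith
  · rw [show c = k from Fin.ext (by omega), show d = l from Fin.ext (by omega),
      show a = b from Fin.ext (by omega), dist_self, zero_add]

/-- `w_ν(x₀,…,x_n) ≤ w_ν(x₀,…,x_i) + w_ν(x_i,…,x_n)`. -/
theorem wt_le_wt_prefix_add_wt_suffix (ν : ∀ n : ℕ, (Fin (n + 1) → Fin (n + 1) → ℝ) → ℝ)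
    (hν : IsDistMatrixNorm ν) {X : Type*} [MetricSpace X] (n i : ℕ) (hi : i ≤ n)
    (x : Fin (n + 1) → X) :
    wt ν x ≤ wt ν (fun k : Fin (i + 1) => x (Fin.castLE (by omega) k)) +
      wt ν (fun k : Fin (n - i + 1) => x ⟨i + k.1, by have hk := k.isLt; omega⟩) := by
  set x' : Fin (i+1) → X := fun k : Fin (i + 1) => x (Fin.castLE (by omega) k) with hx'
  set x'' : Fin (n-i+1) → X :=
    fun k : Fin (n - i + 1) => x ⟨i + k.1, by have hk := k.isLt; omega⟩ with hx''
  set y : Fin (n+1) → X := fun k => x' ⟨min k.1 i, by omega⟩ with hy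
  set z : Fin (n+1) → X := fun k => x'' ⟨k.1 - (n - (n - i)), by omega⟩ with hz
  have hyv : ∀ k : Fin (n+1), y k = x ⟨min k.1 i, by omega⟩ := fun k => rfl
  have hzv : ∀ k : Fin (n+1), z k = x ⟨max k.1 i, by omega⟩ := by
    intro k
    rw [hz, hx'']
    exact congrArg x (Fin.ext (by simp; omega))
  have key : ∀ k l : Fin (n+1), dist (x k) (x l) ≤ dist (y k) (y l) + dist (z k) (z l) := by
    intro k l
    rw [hyv k, hyv l, hzv k, hzv l]
    exact dist_le_clamp x i k l _ _ _ _ rfl rfl rfl rfl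
  have h1 : wt ν x ≤ ν n (fun k l => dist (y k) (y l) + dist (z k) (z l)) := by
    refine hν.mono n _ _ (distMatrix_isDist x) ?_ key
    exact ⟨fun p => by dsimp only; rw [dist_self, dist_self, add_zero],
      fun p q => add_nonneg dist_nonneg dist_nonneg,
      fun p q => by dsimp only; rw [dist_comm (y p), dist_comm (z p)],
      fun p q r => by
        dsimp only
        have h1 := dist_triangle (y p) (y q) (y r)
        have h2 := dist_triangle (z p) (z q) (z r)
        linarith⟩
  have h2 : ν n (fun k l => dist (y k) (y l) + dist (z k) (z l)) ≤ wt ν y + wt ν z :=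
    hν.add_le n _ _ (distMatrix_isDist y) (distMatrix_isDist z)
  have h3 : wt ν y = wt ν x' := wt_clampTop ν hν x' n hi
  have h4 : wt ν z = wt ν x'' := wt_clampBot ν hν x'' n (by omega)
  calc wt ν x ≤ ν n (fun k l => dist (y k) (y l) + dist (z k) (z l)) := h1
    _ ≤ wt ν y + wt ν z := h2
    _ = wt ν x' + wt ν x'' := by rw [h3, h4]
end
end

section
/- Let ν be a distance matrix norm, X a metric space, n ≥ 1, and x₀, …, x_n ∈ X. Then w_ν(x₀, …, x_n) ≤ Σ_{j=0}^{n−1} dist(x_j, x_{j+1}). -/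
noncomputable section

open scoped BigOperators

/- ## Auxiliary material -/

lemma predAbove_val {n : ℕ} (p : Fin n) (i : Fin (n+1)) :
    ((p.predAbove i : Fin n) : ℕ) = if (p : ℕ) < (i : ℕ) then (i : ℕ) - 1 else (i : ℕ) := by
  unfold Fin.predAbove
  split <;> rename_i h <;> rw [Fin.lt_def] at h <;> simp only [Fin.coe_castSucc] at h <;>
    simp [h]

/-- The cut matrix: separates `{0,…,k}` from `{k+1,…,n}`. -/
def cutM (n k : ℕ) : Fin (n + 1) → Fin (n + 1) → ℝ :=
  fun i j => if ((i : ℕ) ≤ k ↔ (j : ℕ) ≤ k) then 0 else 1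

lemma isDist_cutM (n k : ℕ) : IsDistMatrix (cutM n k) := by
  refine ⟨fun i => by simp [cutM], fun i j => ?_, fun i j => ?_, fun i j l => ?_⟩
  · unfold cutM; split <;> norm_num
  · unfold cutM
    by_cases h1 : (i:ℕ) ≤ k <;> by_cases h2 : (j:ℕ) ≤ k <;> simp [h1, h2]
  · unfold cutM
    by_cases h1 : (i:ℕ) ≤ k <;> by_cases h2 : (j:ℕ) ≤ k <;> by_cases h3 : (l:ℕ) ≤ k <;>
      simp [h1, h2, h3] <;> norm_num

lemma isDist_zero (n : ℕ) : IsDistMatrix (fun _ _ => (0:ℝ) : Fin (n+1) → Fin (n+1) → ℝ) := by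
  refine ⟨fun _ => rfl, fun _ _ => le_rfl, fun _ _ => rfl, fun _ _ _ => by norm_num⟩

lemma isDist_add {n : ℕ} {D D' : Fin (n+1) → Fin (n+1) → ℝ}
    (h : IsDistMatrix D) (h' : IsDistMatrix D') :
    IsDistMatrix (fun i j => D i j + D' i j) := by
  obtain ⟨a, b, c, d⟩ := h; obtain ⟨a', b', c', d'⟩ := h'
  refine ⟨fun i => by simp only; rw [a, a']; ring, fun i j => by simpa using add_nonneg (b i j) (b' i j),
    fun i j => by simp only; rw [c, c'], fun i j l => ?_⟩
  simp only
  have := d i j l; have := d' i j l; linarith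

lemma isDist_smul {n : ℕ} {α : ℝ} (hα : 0 ≤ α) {D : Fin (n+1) → Fin (n+1) → ℝ}
    (h : IsDistMatrix D) : IsDistMatrix (fun i j => α * D i j) := by
  obtain ⟨a, b, c, d⟩ := h
  refine ⟨fun i => by simp only; rw [a]; ring, fun i j => mul_nonneg hα (b i j),
    fun i j => by simp only; rw [c], fun i j l => ?_⟩
  simp only
  have := d i j l; nlinarith [b i j, b j l]

lemma isDist_sum {n : ℕ} {ι : Type*} (s : Finset ι) (F : ι → Fin (n+1) → Fin (n+1) → ℝ)
    (hF : ∀ k ∈ s, IsDistMatrix (F k)) :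
    IsDistMatrix (fun i j => ∑ k ∈ s, F k i j) := by
  induction s using Finset.cons_induction with
  | empty => simpa using isDist_zero n
  | cons a s ha ih =>
    have : (fun i j => ∑ k ∈ Finset.cons a s ha, F k i j)
        = fun i j => F a i j + ∑ k ∈ s, F k i j := by
      funext i j; rw [Finset.sum_cons]
    rw [this]
    exact isDist_add (hF a (Finset.mem_cons_self a s))
      (ih fun k hk => hF k (Finset.mem_cons_of_mem hk))

lemma nu_zero (ν : ∀ n : ℕ, (Fin (n + 1) → Fin (n + 1) → ℝ) → ℝ) (hν : IsDistMatrixNorm ν)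
    (n : ℕ) : ν n (fun _ _ => 0) = 0 := by
  have h := hν.smul_eq n 0 le_rfl (fun _ _ => 0) (isDist_zero n)
  simpa using h

lemma nu_sum_le (ν : ∀ n : ℕ, (Fin (n + 1) → Fin (n + 1) → ℝ) → ℝ) (hν : IsDistMatrixNorm ν)
    (n : ℕ) {ι : Type*} (s : Finset ι) (F : ι → Fin (n+1) → Fin (n+1) → ℝ)
    (hF : ∀ k ∈ s, IsDistMatrix (F k)) :
    ν n (fun i j => ∑ k ∈ s, F k i j) ≤ ∑ k ∈ s, ν n (F k) := by
  induction s using Finset.cons_induction with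
  | empty => simp [nu_zero ν hν n]
  | cons a s ha ih =>
    have he : (fun i j => ∑ k ∈ Finset.cons a s ha, F k i j)
        = fun i j => F a i j + ∑ k ∈ s, F k i j := by
      funext i j; rw [Finset.sum_cons]
    rw [he, Finset.sum_cons]
    have h1 := hν.add_le n (F a) (fun i j => ∑ k ∈ s, F k i j)
      (hF a (Finset.mem_cons_self a s)) (isDist_sum s F fun k hk => hF k (Finset.mem_cons_of_mem hk))
    have h2 := ih fun k hk => hF k (Finset.mem_cons_of_mem hk)
    linarith

lemma nu_cut (ν : ∀ n : ℕ, (Fin (n + 1) → Fin (n + 1) → ℝ) → ℝ) (hν : IsDistMatrixNorm ν) :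
    ∀ n k : ℕ, k < n → ν n (cutM n k) = 1 := by
  intro n
  induction n with
  | zero => intro k hk; omega
  | succ m ih =>
    intro k hk
    rcases Nat.eq_zero_or_pos m with rfl | hm
    · interval_cases k
      have he : cutM 1 0 = matE 1 := by
        funext i j; fin_cases i <;> fin_cases j <;> simp [cutM, matE]
      rw [he]; exact hν.normalized
    · rcases Nat.eq_zero_or_pos k with rfl | hk1
      · -- degeneracy at the top
        have h := hν.degen_eq m (cutM m 0) (isDist_cutM m 0) (Fin.last m)
        have key : ∀ a : Fin (m+2), (((Fin.last m).predAbove a : ℕ) ≤ 0) ↔ ((a:ℕ) ≤ 0) := by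
          intro a
          rw [predAbove_val]
          have := a.isLt
          simp only [Fin.val_last]
          split <;> omega
        have he : (fun a b : Fin (m+2) =>
            cutM m 0 ((Fin.last m).predAbove a) ((Fin.last m).predAbove b)) = cutM (m+1) 0 := by
          funext a b
          simp only [cutM, key]
        rw [he] at h
        rw [h]; exact ih 0 hm
      · -- degeneracy at the bottom
        have h := hν.degen_eq m (cutM m (k-1)) (isDist_cutM m (k-1)) 0
        have key : ∀ a : Fin (m+2), (((0 : Fin (m+1)).predAbove a : ℕ) ≤ k - 1) ↔ ((a:ℕ) ≤ k) := by
          intro a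
          rw [predAbove_val]
          simp only [Fin.val_zero]
          rcases Nat.eq_zero_or_pos (a:ℕ) with h0 | h0 <;> simp [h0] <;> omega
        have he : (fun a b : Fin (m+2) =>
            cutM m (k-1) ((0 : Fin (m+1)).predAbove a) ((0 : Fin (m+1)).predAbove b))
            = cutM (m+1) k := by
          funext a b
          simp only [cutM, key]
        rw [he] at h
        rw [h]; exact ih (k-1) (by omega)

lemma cutM_symm (n k : ℕ) (i j : Fin (n+1)) : cutM n k i j = cutM n k j i :=
  (isDist_cutM n k).2.2.1 i j


/-- `w_ν(x₀,…,x_n) ≤ ∑_{j=0}^{n-1} dist (x_j) (x_{j+1})`. -/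
theorem wt_le_sum_consecutive (ν : ∀ n : ℕ, (Fin (n + 1) → Fin (n + 1) → ℝ) → ℝ)
    (hν : IsDistMatrixNorm ν) {X : Type*} [MetricSpace X] (n : ℕ) (hn : 1 ≤ n)
    (x : Fin (n + 1) → X) :
    wt ν x ≤ ∑ j : Fin n, dist (x j.castSucc) (x j.succ) := by
  set d : Fin n → ℝ := fun k => dist (x k.castSucc) (x k.succ) with hd
  set F : Fin n → Fin (n+1) → Fin (n+1) → ℝ := fun k i j => d k * cutM n k i j with hF
  have hFD : ∀ k : Fin n, IsDistMatrix (F k) := fun k =>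
    isDist_smul dist_nonneg (isDist_cutM n k)
  have hDx : IsDistMatrix (fun i j => dist (x i) (x j)) :=
    ⟨fun i => dist_self _, fun i j => dist_nonneg, fun i j => dist_comm _ _,
      fun i j l => dist_triangle _ _ _⟩
  -- entrywise bound
  have entry : ∀ i j : Fin (n+1), (i:ℕ) ≤ (j:ℕ) →
      dist (x i) (x j) ≤ ∑ k : Fin n, F k i j := by
    intro i j hij
    set f : ℕ → X := fun t => x ⟨min t n, by omega⟩ with hf
    have hfx : ∀ i : Fin (n+1), f (i:ℕ) = x i := by
      intro i
      have : min (i:ℕ) n = (i:ℕ) := min_eq_left (by omega)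
      simp only [hf]
      congr 1
      exact Fin.ext this
    have h1 : dist (x i) (x j) ≤ ∑ t ∈ Finset.Ico (i:ℕ) (j:ℕ), dist (f t) (f (t+1)) := by
      rw [← hfx i, ← hfx j]
      exact dist_le_Ico_sum_dist f hij
    refine h1.trans_eq ?_
    have hsum : ∑ k : Fin n, F k i j
        = ∑ t ∈ Finset.range n, if (i:ℕ) ≤ t ∧ t < (j:ℕ) then dist (f t) (f (t+1)) else 0 := by
      rw [Finset.sum_range fun t => _]
      · apply Finset.sum_congr rfl
        intro k _
        simp only [hF, cutM]
        by_cases hc : ((i:ℕ) ≤ (k:ℕ) ↔ (j:ℕ) ≤ (k:ℕ))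
        · rw [if_pos hc, if_neg (by omega)]
          ring
        · rw [if_neg hc, if_pos (by omega)]
          have hdk : d k = dist (f (k:ℕ)) (f ((k:ℕ)+1)) := by
            simp only [hd, hf]
            congr 1 <;> apply congrArg x <;> apply Fin.ext <;>
              simp [Fin.val_succ] <;> omega
          rw [hdk]; ring
    rw [hsum, Finset.sum_ite, Finset.sum_const_zero, add_zero]
    rw [show (Finset.range n).filter (fun t => (i:ℕ) ≤ t ∧ t < (j:ℕ)) = Finset.Ico (i:ℕ) (j:ℕ) by
      ext t
      simp only [Finset.mem_filter, Finset.mem_range, Finset.mem_Ico]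
      have := j.isLt
      omega]
  have entry' : ∀ i j : Fin (n+1), dist (x i) (x j) ≤ ∑ k : Fin n, F k i j := by
    intro i j
    rcases le_total (i:ℕ) (j:ℕ) with h | h
    · exact entry i j h
    · rw [dist_comm]
      refine (entry j i h).trans_eq ?_
      apply Finset.sum_congr rfl
      intro k _
      simp only [hF]
      rw [cutM_symm]
  have hmono := hν.mono n (fun i j => dist (x i) (x j)) (fun i j => ∑ k : Fin n, F k i j)
    hDx (isDist_sum Finset.univ F fun k _ => hFD k) entry'
  have hsub := nu_sum_le ν hν n Finset.univ F fun k _ => hFD k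
  have hval : ∀ k : Fin n, ν n (F k) = d k := by
    intro k
    have := hν.smul_eq n (d k) dist_nonneg (cutM n k) (isDist_cutM n k)
    rw [hF]
    rw [this, nu_cut ν hν n k k.isLt, mul_one]
  calc wt ν x ≤ ν n (fun i j => ∑ k : Fin n, F k i j) := hmono
    _ ≤ ∑ k : Fin n, ν n (F k) := hsub
    _ = ∑ k : Fin n, d k := by simp [hval]
end
end

section
/- For every real number p ≥ 1, the family of maps ν_p : Dist_[n] → ℝ defined by ν_p(D) = max over all m ≥ 1 and strictly increasing sequences 0 ≤ i₀ < i₁ < … < i_m ≤ n of (Σ_{k=1}^{m} D(i_{k−1}, i_k)^p)^{1/p} is a distance matrix norm (it satisfies properties (1)–(5)), and its constants are C_n(ν_p) = ν_p(E_n) = n^{1/p}. -/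
noncomputable section

open scoped BigOperators Pointwise

/-- The `ℓ_p`-norm of a distance matrix: the maximum, over all `m ≥ 1` and all strictly
increasing sequences `0 ≤ i₀ < i₁ < ⋯ < i_m ≤ n`, of
`(∑_{k=1}^m D (i_{k-1}) (i_k) ^ p) ^ (1/p)`. -/
def lpNorm (p : ℝ) (n : ℕ) (D : Fin (n + 1) → Fin (n + 1) → ℝ) : ℝ :=
  sSup { v : ℝ | ∃ (m : ℕ) (i : Fin (m + 1) → Fin (n + 1)), 0 < m ∧ StrictMono i ∧
    v = (∑ k : Fin m, D (i k.castSucc) (i k.succ) ^ p) ^ (1 / p) }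

def chainSet (p : ℝ) (n : ℕ) (D : Fin (n + 1) → Fin (n + 1) → ℝ) : Set ℝ :=
  { v : ℝ | ∃ (m : ℕ) (i : Fin (m + 1) → Fin (n + 1)), 0 < m ∧ StrictMono i ∧
    v = (∑ k : Fin m, D (i k.castSucc) (i k.succ) ^ p) ^ (1 / p) }

lemma lpNorm_eq (p : ℝ) (n : ℕ) (D : Fin (n + 1) → Fin (n + 1) → ℝ) :
    lpNorm p n D = sSup (chainSet p n D) := rfl

variable {p : ℝ}

lemma mem_chainSet_le (hp : 1 ≤ p) {n : ℕ} {D : Fin (n + 1) → Fin (n + 1) → ℝ}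
    (hD : ∀ i j, 0 ≤ D i j) {v : ℝ} (hv : v ∈ chainSet p n D) :
    v ≤ (∑ a : Fin (n + 1) × Fin (n + 1), D a.1 a.2 ^ p) ^ (1 / p) := by
  have hp0 : 0 < p := lt_of_lt_of_le one_pos hp
  obtain ⟨m, i, hm, hi, rfl⟩ := hv
  apply Real.rpow_le_rpow (Finset.sum_nonneg fun k _ => Real.rpow_nonneg (hD _ _) p) ?_
    (div_nonneg zero_le_one hp0.le)
  have hinj : Function.Injective (fun k : Fin m => (i k.castSucc, i k.succ)) := by
    intro a b hab
    simp only [Prod.mk.injEq] at hab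
    exact Fin.castSucc_injective _ (hi.injective hab.1)
  calc ∑ k : Fin m, D (i k.castSucc) (i k.succ) ^ p
      = ∑ a ∈ Finset.univ.image (fun k : Fin m => (i k.castSucc, i k.succ)), D a.1 a.2 ^ p := by
        rw [Finset.sum_image (fun a _ b _ h => hinj h)]
    _ ≤ ∑ a : Fin (n + 1) × Fin (n + 1), D a.1 a.2 ^ p :=
        Finset.sum_le_sum_of_subset_of_nonneg (Finset.subset_univ _)
          (fun a _ _ => Real.rpow_nonneg (hD _ _) p)

lemma chainSet_bddAbove (hp : 1 ≤ p) {n : ℕ} {D : Fin (n + 1) → Fin (n + 1) → ℝ}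
    (hD : ∀ i j, 0 ≤ D i j) : BddAbove (chainSet p n D) :=
  ⟨_, fun _ hv => mem_chainSet_le hp hD hv⟩

lemma lpNorm_nonneg {n : ℕ} {D : Fin (n + 1) → Fin (n + 1) → ℝ}
    (hD : ∀ i j, 0 ≤ D i j) : 0 ≤ lpNorm p n D := by
  rw [lpNorm_eq]
  apply Real.sSup_nonneg
  rintro v ⟨m, i, hm, hi, rfl⟩
  exact Real.rpow_nonneg (Finset.sum_nonneg fun k _ => Real.rpow_nonneg (hD _ _) p) _

lemma chain_le (hp : 1 ≤ p) {n : ℕ} {D : Fin (n + 1) → Fin (n + 1) → ℝ}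
    (hD0 : ∀ i, D i i = 0) (hD : ∀ i j, 0 ≤ D i j) :
    ∀ (m : ℕ) (f : Fin (m + 1) → Fin (n + 1)), Monotone f →
      (∑ k : Fin m, D (f k.castSucc) (f k.succ) ^ p) ^ (1 / p) ≤ lpNorm p n D := by
  have hp0 : 0 < p := lt_of_lt_of_le one_pos hp
  intro m
  induction m with
  | zero =>
    intro f _
    rw [show (∑ k : Fin 0, D (f k.castSucc) (f k.succ) ^ p) = 0 by simp,
        Real.zero_rpow (one_div_ne_zero hp0.ne')]
    exact lpNorm_nonneg hD
  | succ m ih =>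
    intro f hf
    by_cases hsm : StrictMono f
    · rw [lpNorm_eq]
      exact le_csSup (chainSet_bddAbove hp hD) ⟨m + 1, f, Nat.succ_pos m, hsm, rfl⟩
    · have hex : ∃ k : Fin (m + 1), f k.castSucc = f k.succ := by
        by_contra h
        push_neg at h
        exact hsm (Fin.strictMono_iff_lt_succ.mpr fun k =>
          lt_of_le_of_ne (hf (Fin.castSucc_lt_succ : k.castSucc < k.succ).le) (h k))
      obtain ⟨k, hk⟩ := hex
      set f' : Fin (m + 1) → Fin (n + 1) := f ∘ (k.succ).succAbove with hf'def
      have hmono : Monotone f' := hf.comp (Fin.strictMono_succAbove k.succ).monotone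
      have hsum : (∑ j : Fin (m + 1), D (f j.castSucc) (f j.succ) ^ p)
          = ∑ l : Fin m, D (f' l.castSucc) (f' l.succ) ^ p := by
        rw [Fin.sum_univ_succAbove (fun j : Fin (m + 1) => D (f j.castSucc) (f j.succ) ^ p) k]
        have hk0 : D (f k.castSucc) (f k.succ) ^ p = 0 := by
          rw [hk, hD0, Real.zero_rpow hp0.ne']
        rw [hk0, zero_add]
        apply Finset.sum_congr rfl
        intro l _
        rcases lt_trichotomy (l : ℕ) (k : ℕ) with hlk | hlk | hlk
        · have h1 : k.succAbove l = l.castSucc := Fin.succAbove_of_castSucc_lt _ _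
            (by simp only [Fin.lt_def, Fin.coe_castSucc]; omega)
          have h2 : (k.succ).succAbove l.castSucc = l.castSucc.castSucc :=
            Fin.succAbove_of_castSucc_lt _ _
              (by simp only [Fin.lt_def, Fin.coe_castSucc, Fin.val_succ]; omega)
          have h3 : (k.succ).succAbove l.succ = l.succ.castSucc :=
            Fin.succAbove_of_castSucc_lt _ _
              (by simp only [Fin.lt_def, Fin.coe_castSucc, Fin.val_succ]; omega)
          simp only [hf'def, Function.comp_apply, h1, h2, h3, Fin.succ_castSucc]
        · have h1 : k.succAbove l = l.succ := Fin.succAbove_of_le_castSucc _ _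
            (by simp only [Fin.le_def, Fin.coe_castSucc]; omega)
          have h2 : (k.succ).succAbove l.castSucc = l.castSucc.castSucc :=
            Fin.succAbove_of_castSucc_lt _ _
              (by simp only [Fin.lt_def, Fin.coe_castSucc, Fin.val_succ]; omega)
          have h3 : (k.succ).succAbove l.succ = l.succ.succ :=
            Fin.succAbove_of_le_castSucc _ _
              (by simp only [Fin.le_def, Fin.coe_castSucc, Fin.val_succ]; omega)
          have e1 : l.succ.castSucc = k.succ := by
            apply Fin.ext; simp only [Fin.coe_castSucc, Fin.val_succ]; omega
          have e2 : l.castSucc.castSucc = k.castSucc := by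
            apply Fin.ext; simp only [Fin.coe_castSucc]; omega
          simp only [hf'def, Function.comp_apply, h1, h2, h3, e1, e2, hk]
        · have h1 : k.succAbove l = l.succ := Fin.succAbove_of_le_castSucc _ _
            (by simp only [Fin.le_def, Fin.coe_castSucc]; omega)
          have h2 : (k.succ).succAbove l.castSucc = l.castSucc.succ :=
            Fin.succAbove_of_le_castSucc _ _
              (by simp only [Fin.le_def, Fin.coe_castSucc, Fin.val_succ]; omega)
          have h3 : (k.succ).succAbove l.succ = l.succ.succ :=
            Fin.succAbove_of_le_castSucc _ _
              (by simp only [Fin.le_def, Fin.coe_castSucc, Fin.val_succ]; omega)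
          simp only [hf'def, Function.comp_apply, h1, h2, h3, Fin.succ_castSucc]
      rw [hsum]
      exact ih f' hmono

lemma scale_sum (hp0 : 0 < p) {α : ℝ} (hα : 0 ≤ α) {m : ℕ} {d : Fin m → ℝ}
    (hd : ∀ k, 0 ≤ d k) :
    (∑ k, (α * d k) ^ p) ^ (1 / p) = α * (∑ k, d k ^ p) ^ (1 / p) := by
  have h1 : ∀ k : Fin m, (α * d k) ^ p = α ^ p * d k ^ p := fun k => Real.mul_rpow hα (hd k)
  simp only [h1, ← Finset.mul_sum]
  rw [Real.mul_rpow (Real.rpow_nonneg hα p)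
      (Finset.sum_nonneg fun k _ => Real.rpow_nonneg (hd k) p),
    ← Real.rpow_mul hα, mul_one_div_cancel hp0.ne', Real.rpow_one]

lemma lpNorm_matE (hp : 1 ≤ p) (n : ℕ) : lpNorm p n (matE n) = (n : ℝ) ^ (1 / p) := by
  have hp0 : 0 < p := lt_of_lt_of_le one_pos hp
  have hE : ∀ (i j : Fin (n + 1)), 0 ≤ matE n i j := fun i j => by
    unfold matE; split <;> norm_num
  rcases Nat.eq_zero_or_pos n with hn | hn
  · subst hn
    rw [lpNorm_eq]
    have hempty : chainSet p 0 (matE 0) = ∅ := by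
      ext v
      simp only [chainSet, Set.mem_setOf_eq, Set.mem_empty_iff_false, iff_false]
      rintro ⟨m, i, hm, hi, rfl⟩
      have h01 : (⟨0, by omega⟩ : Fin (m + 1)) < ⟨m, by omega⟩ := by
        simp only [Fin.mk_lt_mk]; omega
      have := hi h01
      have h0 := (i ⟨0, by omega⟩).isLt
      have h1 := (i ⟨m, by omega⟩).isLt
      rw [Fin.lt_def] at this
      omega
    rw [hempty, Real.sSup_empty, Nat.cast_zero, Real.zero_rpow (one_div_ne_zero hp0.ne')]
  · have hterm : ∀ (m : ℕ) (i : Fin (m + 1) → Fin (n + 1)), StrictMono i →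
        (∑ k : Fin m, matE n (i k.castSucc) (i k.succ) ^ p) = m := by
      intro m i hi
      have : ∀ k : Fin m, matE n (i k.castSucc) (i k.succ) ^ p = 1 := fun k => by
        rw [matE]
        rw [if_neg (fun h => (Fin.castSucc_lt_succ : k.castSucc < k.succ).ne (hi.injective h))]
        exact Real.one_rpow p
      simp [this]
    rw [lpNorm_eq]
    apply le_antisymm
    · apply Real.sSup_le _ (Real.rpow_nonneg (Nat.cast_nonneg n) _)
      rintro v ⟨m, i, hm, hi, rfl⟩
      rw [hterm m i hi]
      have hmn : m ≤ n := by
        have := Fintype.card_le_of_injective i hi.injective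
        simpa using this
      exact Real.rpow_le_rpow (Nat.cast_nonneg m) (Nat.cast_le.mpr hmn)
        (div_nonneg zero_le_one hp0.le)
    · apply le_csSup (chainSet_bddAbove hp hE)
      have hid : StrictMono (fun k : Fin (n + 1) => k) := fun a b h => h
      exact ⟨n, fun k => k, hn, hid, by rw [hterm n _ hid]⟩

/-- For `p ≥ 1`, `ν_p` is a distance matrix norm, with constants `C_n(ν_p) = n^{1/p}`. -/
theorem lpNorm_isDistMatrixNorm_and_matC (p : ℝ) (hp : 1 ≤ p) :
    IsDistMatrixNorm (lpNorm p) ∧ ∀ n : ℕ, lpNorm p n (matE n) = (n : ℝ) ^ (1 / p) := by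
  have hp0 : 0 < p := lt_of_lt_of_le one_pos hp
  refine ⟨⟨?_, ?_, ?_, ?_, ?_, ?_, ?_⟩, fun n => lpNorm_matE hp n⟩
  · -- nonneg
    intro n D hD
    exact lpNorm_nonneg hD.2.1
  · -- smul_eq
    intro n α hα D hD
    rw [lpNorm_eq, lpNorm_eq]
    have hset : chainSet p n (fun i j => α * D i j) = α • chainSet p n D := by
      ext v
      constructor
      · rintro ⟨m, i, hm, hi, rfl⟩
        refine Set.mem_smul_set.mpr
          ⟨(∑ k : Fin m, D (i k.castSucc) (i k.succ) ^ p) ^ (1 / p), ⟨m, i, hm, hi, rfl⟩, ?_⟩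
        rw [smul_eq_mul]
        exact (scale_sum hp0 hα (fun k => hD.2.1 _ _)).symm
      · intro hv
        obtain ⟨w, ⟨m, i, hm, hi, rfl⟩, rfl⟩ := Set.mem_smul_set.mp hv
        refine ⟨m, i, hm, hi, ?_⟩
        rw [smul_eq_mul]
        exact (scale_sum hp0 hα (fun k => hD.2.1 _ _)).symm
    rw [hset, Real.sSup_smul_of_nonneg hα, smul_eq_mul]
  · -- add_le
    intro n D D' hD hD'
    rw [lpNorm_eq p n (fun i j => D i j + D' i j)]
    apply Real.sSup_le _ (add_nonneg (lpNorm_nonneg hD.2.1) (lpNorm_nonneg hD'.2.1))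
    rintro v ⟨m, i, hm, hi, rfl⟩
    have h1 : (∑ k : Fin m, D (i k.castSucc) (i k.succ) ^ p) ^ (1 / p) ≤ lpNorm p n D :=
      le_csSup (chainSet_bddAbove hp hD.2.1) ⟨m, i, hm, hi, rfl⟩
    have h2 : (∑ k : Fin m, D' (i k.castSucc) (i k.succ) ^ p) ^ (1 / p) ≤ lpNorm p n D' :=
      le_csSup (chainSet_bddAbove hp hD'.2.1) ⟨m, i, hm, hi, rfl⟩
    have h3 := Real.Lp_add_le_of_nonneg (f := fun k : Fin m => D (i k.castSucc) (i k.succ))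
      (g := fun k : Fin m => D' (i k.castSucc) (i k.succ)) (s := Finset.univ) hp
      (fun k _ => hD.2.1 _ _) (fun k _ => hD'.2.1 _ _)
    exact h3.trans (add_le_add h1 h2)
  · -- mono
    intro n D D' hD hD' hle
    rw [lpNorm_eq p n D]
    apply Real.sSup_le _ (lpNorm_nonneg hD'.2.1)
    rintro v ⟨m, i, hm, hi, rfl⟩
    refine le_trans (Real.rpow_le_rpow
      (Finset.sum_nonneg fun k _ => Real.rpow_nonneg (hD.2.1 _ _) p)
      (Finset.sum_le_sum fun k _ => Real.rpow_le_rpow (hD.2.1 _ _) (hle _ _) hp0.le)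
      (div_nonneg zero_le_one hp0.le)) ?_
    exact le_csSup (chainSet_bddAbove hp hD'.2.1) ⟨m, i, hm, hi, rfl⟩
  · -- normalized
    rw [lpNorm_matE hp 1]
    simp
  · -- face_le
    intro n D hD i
    rw [lpNorm_eq p n]
    apply Real.sSup_le _ (lpNorm_nonneg hD.2.1)
    rintro v ⟨m, j, hm, hj, rfl⟩
    exact le_csSup (chainSet_bddAbove hp hD.2.1)
      ⟨m, fun t => i.succAbove (j t), hm, (Fin.strictMono_succAbove i).comp hj, rfl⟩
  · -- degen_eq
    intro n D hD i
    have hSD : ∀ (k l : Fin (n + 2)), 0 ≤ D (i.predAbove k) (i.predAbove l) :=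
      fun k l => hD.2.1 _ _
    apply le_antisymm
    · rw [lpNorm_eq p (n + 1)]
      apply Real.sSup_le _ (lpNorm_nonneg hD.2.1)
      rintro v ⟨m, j, hm, hj, rfl⟩
      exact chain_le hp hD.1 hD.2.1 m (fun t => i.predAbove (j t))
        ((Fin.predAbove_right_monotone i).comp hj.monotone)
    · rw [lpNorm_eq p n D, lpNorm_eq p (n + 1)]
      apply Real.sSup_le _ (Real.sSup_nonneg fun v hv => by
        obtain ⟨m, j, hm, hj, rfl⟩ := hv
        exact Real.rpow_nonneg (Finset.sum_nonneg fun k _ => Real.rpow_nonneg (hSD _ _) p) _)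
      rintro v ⟨m, g, hm, hg, rfl⟩
      have hsec : StrictMono (fun t : Fin (m + 1) => (i.castSucc).succAbove (g t)) :=
        (Fin.strictMono_succAbove i.castSucc).comp hg
      have hval : (∑ k : Fin m, D (g k.castSucc) (g k.succ) ^ p)
          = ∑ k : Fin m, D (i.predAbove ((i.castSucc).succAbove (g k.castSucc)))
              (i.predAbove ((i.castSucc).succAbove (g k.succ))) ^ p := by
        apply Finset.sum_congr rfl
        intro k _
        rw [Fin.predAbove_succAbove, Fin.predAbove_succAbove]
      have hmem : (∑ k : Fin m, D (g k.castSucc) (g k.succ) ^ p) ^ (1 / p) ∈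
          chainSet p (n + 1) (fun k l => D (i.predAbove k) (i.predAbove l)) := by
        refine ⟨m, fun t => (i.castSucc).succAbove (g t), hm, hsec, ?_⟩
        rw [hval]
      exact le_csSup (chainSet_bddAbove hp hSD) hmem
end
end

section
/- Let p ≥ 1 be a real number, X a metric space, x₀, …, x_n ∈ X with n ≥ 1, and r ≥ 0. Then w_p(x₀, …, x_n) ≤ r if and only if there exist nonnegative real numbers r₁, …, r_n such that (Σ_{k=1}^{n} r_k^p)^{1/p} ≤ r and dist(x_i, x_j) ≤ (Σ_{k=i+1}^{j} r_k^p)^{1/p} for all 0 ≤ i ≤ j ≤ n. -/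
noncomputable section

open scoped BigOperators

/-- The `ℓ_p`-weight of a tuple of points in a (pseudo)metric space. -/
def lpwt (p : ℝ) {X : Type*} [PseudoMetricSpace X] {n : ℕ} (x : Fin (n + 1) → X) : ℝ :=
  lpNorm p n fun i j => dist (x i) (x j)

namespace ChoAux

variable (p : ℝ) {X : Type*} [MetricSpace X] {n : ℕ} (x : Fin (n + 1) → X)

/-- Values of subsequence sums ending exactly at `j`. -/
def B (j : Fin (n + 1)) : Set ℝ :=
  { v | ∃ (m : ℕ) (i : Fin (m + 1) → Fin (n + 1)), 0 < m ∧ StrictMono i ∧ i (Fin.last m) = j ∧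
    v = (∑ k : Fin m, dist (x (i k.castSucc)) (x (i k.succ)) ^ p) ^ (1 / p) }

/-- Values of subsequence sums ending at most at `j`. -/
def A (j : Fin (n + 1)) : Set ℝ :=
  { v | ∃ (m : ℕ) (i : Fin (m + 1) → Fin (n + 1)), 0 < m ∧ StrictMono i ∧ i (Fin.last m) ≤ j ∧
    v = (∑ k : Fin m, dist (x (i k.castSucc)) (x (i k.succ)) ^ p) ^ (1 / p) }

def W (j : Fin (n + 1)) : ℝ := sSup (A p x j)

variable {p x}

theorem B_subset_A {e j : Fin (n + 1)} (h : e ≤ j) : B p x e ⊆ A p x j := by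
  rintro v ⟨m, i, hm, hmono, hlast, rfl⟩
  exact ⟨m, i, hm, hmono, hlast ▸ h, rfl⟩

theorem nonneg_of_mem_A {j : Fin (n + 1)} {v : ℝ} (hv : v ∈ A p x j) : 0 ≤ v := by
  obtain ⟨m, i, hm, hmono, hlast, rfl⟩ := hv
  exact Real.rpow_nonneg (Finset.sum_nonneg fun k _ => Real.rpow_nonneg dist_nonneg p) _

theorem bddAbove_A (hp : 1 ≤ p) (j : Fin (n + 1)) : BddAbove (A p x j) := by
  refine ⟨(∑ ab : Fin (n + 1) × Fin (n + 1), dist (x ab.1) (x ab.2) ^ p) ^ (1 / p), ?_⟩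
  rintro v ⟨m, i, hm, hmono, hlast, rfl⟩
  refine Real.rpow_le_rpow (Finset.sum_nonneg fun k _ => Real.rpow_nonneg dist_nonneg p) ?_ (by positivity)
  have hinj : ∀ a ∈ (Finset.univ : Finset (Fin m)), ∀ b ∈ (Finset.univ : Finset (Fin m)),
      (fun k : Fin m => (i k.castSucc, i k.succ)) a = (fun k : Fin m => (i k.castSucc, i k.succ)) b → a = b := by
    intro a _ b _ hab
    simp only [Prod.mk.injEq] at hab
    exact Fin.castSucc_injective _ (hmono.injective hab.1)
  calc ∑ k : Fin m, dist (x (i k.castSucc)) (x (i k.succ)) ^ p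
      = ∑ ab ∈ Finset.univ.image (fun k : Fin m => (i k.castSucc, i k.succ)),
          dist (x ab.1) (x ab.2) ^ p :=
        (Finset.sum_image (f := fun ab : Fin (n+1) × Fin (n+1) => dist (x ab.1) (x ab.2) ^ p) hinj).symm
    _ ≤ ∑ ab : Fin (n + 1) × Fin (n + 1), dist (x ab.1) (x ab.2) ^ p :=
        Finset.sum_le_sum_of_subset_of_nonneg (Finset.subset_univ _)
          (fun _ _ _ => Real.rpow_nonneg dist_nonneg p)

theorem A_zero : A p x 0 = ∅ := by
  ext v
  simp only [A, Set.mem_setOf_eq, Set.mem_empty_iff_false, iff_false]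
  rintro ⟨m, i, hm, hmono, hlast, rfl⟩
  have h0 : i 0 < i (Fin.last m) := hmono (by rw [Fin.lt_def]; simpa using hm)
  exact absurd (lt_of_lt_of_le h0 hlast) (Fin.not_lt_zero _)

theorem W_nonneg (j : Fin (n + 1)) : 0 ≤ W p x j :=
  Real.sSup_nonneg fun _ hv => nonneg_of_mem_A hv

theorem single_mem {i j : Fin (n + 1)} (hij : i < j) (hp : 1 ≤ p) :
    dist (x i) (x j) ∈ B p x j := by
  have hp0 : p ≠ 0 := by positivity
  refine ⟨1, ![i, j], one_pos, ?_, rfl, ?_⟩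
  · rw [Fin.strictMono_iff_lt_succ]
    intro k
    fin_cases k
    simpa using hij
  · simp only [Fin.sum_univ_one]
    rw [show (0 : Fin 1).castSucc = 0 from rfl, show (0 : Fin 1).succ = 1 from rfl]
    simp only [Matrix.cons_val_zero, Matrix.cons_val_one, Matrix.head_cons]
    rw [one_div, Real.rpow_rpow_inv dist_nonneg hp0]

theorem rpow_of_mem_B {e : Fin (n + 1)} {v : ℝ} (hv : v ∈ B p x e) (hp : 1 ≤ p) :
    ∃ S : ℝ, 0 ≤ S ∧ v = S ^ (1 / p) ∧ v ^ p = S ∧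
      ∃ (m : ℕ) (i : Fin (m + 1) → Fin (n + 1)), 0 < m ∧ StrictMono i ∧ i (Fin.last m) = e ∧
        S = ∑ k : Fin m, dist (x (i k.castSucc)) (x (i k.succ)) ^ p := by
  obtain ⟨m, i, hm, hmono, hlast, rfl⟩ := hv
  have hS : (0:ℝ) ≤ ∑ k : Fin m, dist (x (i k.castSucc)) (x (i k.succ)) ^ p :=
    Finset.sum_nonneg fun k _ => Real.rpow_nonneg dist_nonneg p
  exact ⟨_, hS, rfl, by rw [one_div, Real.rpow_inv_rpow hS (by positivity)],
    m, i, hm, hmono, hlast, rfl⟩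

theorem snoc_mem {e j : Fin (n + 1)} {v : ℝ} (hv : v ∈ B p x e) (hej : e < j) (hp : 1 ≤ p) :
    (v ^ p + dist (x e) (x j) ^ p) ^ (1 / p) ∈ B p x j := by
  obtain ⟨S, hS, hvS, hvp, m, i, hm, hmono, hlast, rfl⟩ := rpow_of_mem_B hv hp
  refine ⟨m + 1, Fin.snoc i j, Nat.succ_pos m, ?_, by simp [Fin.snoc_last], ?_⟩
  · rw [Fin.strictMono_iff_lt_succ]
    intro k
    refine Fin.lastCases ?_ (fun k' => ?_) k
    · rw [Fin.succ_last, Fin.snoc_last, Fin.snoc_castSucc, hlast]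
      exact hej
    · rw [Fin.succ_castSucc, Fin.snoc_castSucc, Fin.snoc_castSucc]
      exact hmono (Fin.castSucc_lt_succ (i := k'))
  · congr 1
    rw [Fin.sum_univ_castSucc, hvp]
    congr 1
    · apply Finset.sum_congr rfl
      intro k _
      rw [Fin.succ_castSucc, Fin.snoc_castSucc, Fin.snoc_castSucc]
    · rw [Fin.succ_last, Fin.snoc_last, Fin.snoc_castSucc, hlast]

/-- The key inequality. -/
theorem key {i j : Fin (n + 1)} (hij : i < j) (hp : 1 ≤ p) :
    W p x i ^ p + dist (x i) (x j) ^ p ≤ W p x j ^ p := by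
  have hp0 : p ≠ 0 := by positivity
  have hWj : dist (x i) (x j) ≤ W p x j :=
    le_csSup (bddAbove_A hp j) (B_subset_A le_rfl (single_mem hij hp))
  have hdj : dist (x i) (x j) ^ p ≤ W p x j ^ p :=
    Real.rpow_le_rpow dist_nonneg hWj (by positivity)
  rcases eq_or_ne i 0 with rfl | hi0
  · rw [W, A_zero, Real.sSup_empty, Real.zero_rpow hp0, zero_add]
    exact hdj
  -- i ≠ 0, so A i is nonempty
  have hi_pos : (0 : Fin (n + 1)) < i := Fin.pos_iff_ne_zero.mpr hi0
  -- every element of A i satisfies the extension bound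
  have hext : ∀ v ∈ A p x i, v ^ p + dist (x i) (x j) ^ p ≤ W p x j ^ p := by
    rintro v hv
    obtain ⟨m, seq, hm, hmono, hlast, rfl⟩ := hv
    have hvB : (∑ k : Fin m, dist (x (seq k.castSucc)) (x (seq k.succ)) ^ p) ^ (1 / p)
        ∈ B p x (seq (Fin.last m)) := ⟨m, seq, hm, hmono, rfl, rfl⟩
    set v := (∑ k : Fin m, dist (x (seq k.castSucc)) (x (seq k.succ)) ^ p) ^ (1 / p) with hv_def
    have hv0 : 0 ≤ v := Real.rpow_nonneg (Finset.sum_nonneg fun k _ => Real.rpow_nonneg dist_nonneg p) _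
    rcases eq_or_lt_of_le hlast with heq | hlt
    · -- ends exactly at i
      have hmem : (v ^ p + dist (x i) (x j) ^ p) ^ (1 / p) ∈ B p x j := by
        have := snoc_mem hvB (heq ▸ hij) hp
        rwa [heq] at this
      have hle : (v ^ p + dist (x i) (x j) ^ p) ^ (1 / p) ≤ W p x j :=
        le_csSup (bddAbove_A hp j) (B_subset_A le_rfl hmem)
      have hsum0 : (0:ℝ) ≤ v ^ p + dist (x i) (x j) ^ p := by positivity
      calc v ^ p + dist (x i) (x j) ^ p
          = (((v ^ p + dist (x i) (x j) ^ p) ^ (1 / p)) : ℝ) ^ p := by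
            rw [one_div, Real.rpow_inv_rpow hsum0 hp0]
        _ ≤ W p x j ^ p := Real.rpow_le_rpow (Real.rpow_nonneg hsum0 _) hle (by positivity)
    · -- ends strictly before i: snoc i then j
      set e := seq (Fin.last m)
      have hv1B : (v ^ p + dist (x e) (x i) ^ p) ^ (1 / p) ∈ B p x i := snoc_mem hvB hlt hp
      have h1nn : (0:ℝ) ≤ v ^ p + dist (x e) (x i) ^ p := by positivity
      set v1 := (v ^ p + dist (x e) (x i) ^ p) ^ (1 / p) with hv1_def
      have hv1p : v1 ^ p = v ^ p + dist (x e) (x i) ^ p := by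
        rw [hv1_def, one_div, Real.rpow_inv_rpow h1nn hp0]
      have hmem : (v1 ^ p + dist (x i) (x j) ^ p) ^ (1 / p) ∈ B p x j := snoc_mem hv1B hij hp
      have hle : (v1 ^ p + dist (x i) (x j) ^ p) ^ (1 / p) ≤ W p x j :=
        le_csSup (bddAbove_A hp j) (B_subset_A le_rfl hmem)
      have hsum0 : (0:ℝ) ≤ v1 ^ p + dist (x i) (x j) ^ p := by positivity
      have : v1 ^ p + dist (x i) (x j) ^ p ≤ W p x j ^ p := by
        calc v1 ^ p + dist (x i) (x j) ^ p
            = (((v1 ^ p + dist (x i) (x j) ^ p) ^ (1 / p)) : ℝ) ^ p := by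
              rw [one_div, Real.rpow_inv_rpow hsum0 hp0]
          _ ≤ W p x j ^ p := Real.rpow_le_rpow (Real.rpow_nonneg hsum0 _) hle (by positivity)
      refine le_trans ?_ this
      rw [hv1p]
      have : (0:ℝ) ≤ dist (x e) (x i) ^ p := Real.rpow_nonneg dist_nonneg p
      linarith
  -- A i nonempty, so W i^p - stuff
  have hne : (A p x i).Nonempty :=
    ⟨_, B_subset_A le_rfl (single_mem hi_pos hp)⟩
  obtain ⟨v0, hv0⟩ := hne
  have hC0 : 0 ≤ W p x j ^ p - dist (x i) (x j) ^ p := by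
    have := hext v0 hv0
    have hv0nn : 0 ≤ v0 := nonneg_of_mem_A hv0
    have : (0:ℝ) ≤ v0 ^ p := Real.rpow_nonneg hv0nn p
    linarith [hext v0 hv0]
  have hWi : W p x i ≤ (W p x j ^ p - dist (x i) (x j) ^ p) ^ (1 / p) := by
    apply Real.sSup_le _ (Real.rpow_nonneg hC0 _)
    intro v hv
    have h1 : v ^ p ≤ W p x j ^ p - dist (x i) (x j) ^ p := by linarith [hext v hv]
    have hvnn : 0 ≤ v := nonneg_of_mem_A hv
    calc v = (v ^ p) ^ (1 / p) := by rw [one_div, Real.rpow_rpow_inv hvnn hp0]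
      _ ≤ (W p x j ^ p - dist (x i) (x j) ^ p) ^ (1 / p) :=
        Real.rpow_le_rpow (Real.rpow_nonneg hvnn p) h1 (by positivity)
  have := Real.rpow_le_rpow (W_nonneg i) hWi (le_of_lt (by positivity : (0:ℝ) < p))
  rw [one_div, Real.rpow_inv_rpow hC0 hp0] at this
  linarith


theorem W_zero : W p x (0 : Fin (n + 1)) = 0 := by
  rw [W, A_zero, Real.sSup_empty]

theorem lpwt_eq_W_last : lpwt p x = W p x (Fin.last n) := by
  unfold lpwt lpNorm W A
  congr 1
  ext v
  constructor
  · rintro ⟨m, i, hm, hmono, rfl⟩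
    exact ⟨m, i, hm, hmono, Fin.le_last _, rfl⟩
  · rintro ⟨m, i, hm, hmono, _, rfl⟩
    exact ⟨m, i, hm, hmono, rfl⟩

end ChoAux

/-- Cho's characterization of the `ℓ_p`-weight: `w_p(x₀,…,x_n) ≤ r` iff there are
nonnegative reals `t₁,…,t_n` with `(∑ t_k^p)^{1/p} ≤ r` and
`dist (x_i) (x_j) ≤ (∑_{k=i+1}^{j} t_k^p)^{1/p}` for all `i ≤ j`.
(Here `t k` for `k : Fin n` plays the role of `r_{k+1}`.) -/
theorem lpwt_le_iff_exists (p : ℝ) (hp : 1 ≤ p) {X : Type*} [MetricSpace X] (n : ℕ)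
    (hn : 1 ≤ n) (x : Fin (n + 1) → X) (r : ℝ) (hr : 0 ≤ r) :
    lpwt p x ≤ r ↔
      ∃ t : Fin n → ℝ, (∀ k, 0 ≤ t k) ∧ (∑ k : Fin n, t k ^ p) ^ (1 / p) ≤ r ∧
        ∀ i j : Fin (n + 1), i ≤ j →
          dist (x i) (x j) ≤
            (∑ k ∈ Finset.univ.filter fun k : Fin n => (i : ℕ) ≤ (k : ℕ) ∧ (k : ℕ) < (j : ℕ),
              t k ^ p) ^ (1 / p) := by
  have hppos : (0:ℝ) < p := lt_of_lt_of_le one_pos hp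
  have hp0 : p ≠ 0 := ne_of_gt hppos
  have hW := ChoAux.lpwt_eq_W_last (p := p) (x := x)
  constructor
  · -- forward direction
    intro h
    set G : ℕ → ℝ := fun k => ChoAux.W p x ⟨min k n, Nat.lt_succ_of_le (min_le_right _ _)⟩ ^ p
      with hGdef
    have hG : ∀ i : Fin (n + 1), G (i : ℕ) = ChoAux.W p x i ^ p := by
      intro i
      show ChoAux.W p x ⟨min (i : ℕ) n, _⟩ ^ p = ChoAux.W p x i ^ p
      congr 1
      exact congrArg _ (Fin.ext (min_eq_left (Nat.lt_succ_iff.mp i.isLt)))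
    have hkey : ∀ k : Fin n, G ((k : ℕ) + 1) - G (k : ℕ) ≥ dist (x k.castSucc) (x k.succ) ^ p := by
      intro k
      have h1 : G ((k : ℕ) + 1) = ChoAux.W p x k.succ ^ p := by
        have := hG k.succ; rwa [Fin.val_succ] at this
      have h2 : G (k : ℕ) = ChoAux.W p x k.castSucc ^ p := by
        have := hG k.castSucc; rwa [Fin.coe_castSucc] at this
      have := ChoAux.key (p := p) (x := x) (Fin.castSucc_lt_succ (i := k)) hp
      rw [h1, h2]; linarith
    have hGd : ∀ k : Fin n, 0 ≤ G ((k : ℕ) + 1) - G (k : ℕ) := by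
      intro k
      have := hkey k
      have : (0:ℝ) ≤ dist (x k.castSucc) (x k.succ) ^ p := Real.rpow_nonneg dist_nonneg p
      linarith [hkey k]
    refine ⟨fun k => (G ((k : ℕ) + 1) - G (k : ℕ)) ^ (1 / p), fun k => Real.rpow_nonneg (hGd k) _, ?_, ?_⟩
    · -- total sum bound
      have htp : ∀ k : Fin n, ((G ((k : ℕ) + 1) - G (k : ℕ)) ^ (1 / p)) ^ p
          = G ((k : ℕ) + 1) - G (k : ℕ) := fun k => by
        rw [one_div, Real.rpow_inv_rpow (hGd k) hp0]
      have hsum : ∑ k : Fin n, ((G ((k : ℕ) + 1) - G (k : ℕ)) ^ (1 / p)) ^ p = G n - G 0 := by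
        rw [Finset.sum_congr rfl fun k _ => htp k,
          Fin.sum_univ_eq_sum_range (fun l => G (l + 1) - G l) n, Finset.sum_range_sub]
      have hGn : G n = lpwt p x ^ p := by
        have := hG (Fin.last n); rw [Fin.val_last] at this; rw [this, hW]
      have hG0 : G 0 = 0 := by
        have := hG (0 : Fin (n + 1))
        rw [Fin.val_zero] at this
        rw [this, ChoAux.W_zero, Real.zero_rpow hp0]
      rw [hsum, hGn, hG0, sub_zero, one_div,
        Real.rpow_rpow_inv (hW ▸ ChoAux.W_nonneg (Fin.last n)) hp0]
      exact h
    · -- distance bounds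
      intro i j hij
      have hfilter : (∑ k ∈ Finset.univ.filter fun k : Fin n => (i : ℕ) ≤ (k : ℕ) ∧ (k : ℕ) < (j : ℕ),
          ((G ((k : ℕ) + 1) - G (k : ℕ)) ^ (1 / p)) ^ p) = G (j : ℕ) - G (i : ℕ) := by
        have hstep : ∀ k ∈ Finset.univ.filter fun k : Fin n => (i : ℕ) ≤ (k : ℕ) ∧ (k : ℕ) < (j : ℕ),
            ((G ((k : ℕ) + 1) - G (k : ℕ)) ^ (1 / p)) ^ p = G ((k : ℕ) + 1) - G (k : ℕ) :=
          fun k _ => by rw [one_div, Real.rpow_inv_rpow (hGd k) hp0]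
        rw [Finset.sum_congr rfl hstep]
        have hbij : (∑ k ∈ Finset.univ.filter fun k : Fin n => (i : ℕ) ≤ (k : ℕ) ∧ (k : ℕ) < (j : ℕ),
            (G ((k : ℕ) + 1) - G (k : ℕ)))
            = ∑ l ∈ Finset.Ico (i : ℕ) (j : ℕ), (G (l + 1) - G l) := by
          refine Finset.sum_nbij' (fun k : Fin n => (k : ℕ))
            (fun l => (⟨min l (n - 1), lt_of_le_of_lt (min_le_right _ _) (by omega)⟩ : Fin n))
            ?_ ?_ ?_ ?_ ?_
          · intro a ha
            simp only [Finset.mem_filter, Finset.mem_univ, true_and] at ha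
            simp only [Finset.mem_Ico]
            exact ha
          · intro l hl
            simp only [Finset.mem_Ico] at hl
            have hjn : (j : ℕ) ≤ n := Nat.lt_succ_iff.mp j.isLt
            simp only [Finset.mem_filter, Finset.mem_univ, true_and]
            constructor <;> simp <;> omega
          · intro a ha
            simp only [Finset.mem_filter, Finset.mem_univ, true_and] at ha
            have hjn : (j : ℕ) ≤ n := Nat.lt_succ_iff.mp j.isLt
            apply Fin.ext
            simp
            omega
          · intro l hl
            simp only [Finset.mem_Ico] at hl
            have hjn : (j : ℕ) ≤ n := Nat.lt_succ_iff.mp j.isLt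
            simp
            omega
          · intro a ha
            rfl
        rw [hbij, Finset.sum_Ico_eq_sub _ hij, Finset.sum_range_sub, Finset.sum_range_sub]
        ring
      rw [hfilter]
      rcases eq_or_lt_of_le hij with rfl | hlt
      · rw [dist_self, sub_self]
        exact Real.rpow_nonneg le_rfl _
      · have hkey2 := ChoAux.key (p := p) (x := x) hlt hp
        have hGj : G (j : ℕ) = ChoAux.W p x j ^ p := hG j
        have hGi : G (i : ℕ) = ChoAux.W p x i ^ p := hG i
        have hdp : dist (x i) (x j) ^ p ≤ G (j : ℕ) - G (i : ℕ) := by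
          rw [hGj, hGi]; linarith
        calc dist (x i) (x j) = (dist (x i) (x j) ^ p) ^ (1 / p) := by
              rw [one_div, Real.rpow_rpow_inv dist_nonneg hp0]
          _ ≤ (G (j : ℕ) - G (i : ℕ)) ^ (1 / p) :=
              Real.rpow_le_rpow (Real.rpow_nonneg dist_nonneg p) hdp (by positivity)
  · -- reverse direction
    rintro ⟨t, ht0, htr, htd⟩
    rw [lpwt, lpNorm]
    refine Real.sSup_le ?_ hr
    rintro v ⟨m, seq, hm, hmono, rfl⟩
    set F : Fin m → Finset (Fin n) := fun k =>
      Finset.univ.filter fun l : Fin n =>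
        ((seq k.castSucc : Fin (n+1)) : ℕ) ≤ (l : ℕ) ∧ (l : ℕ) < ((seq k.succ : Fin (n+1)) : ℕ)
      with hFdef
    have hle : ∀ k : Fin m, dist (x (seq k.castSucc)) (x (seq k.succ)) ^ p ≤ ∑ l ∈ F k, t l ^ p := by
      intro k
      have h1 := htd (seq k.castSucc) (seq k.succ) (le_of_lt (hmono (Fin.castSucc_lt_succ (i := k))))
      have hs0 : (0:ℝ) ≤ ∑ l ∈ F k, t l ^ p :=
        Finset.sum_nonneg fun l _ => Real.rpow_nonneg (ht0 l) p
      calc dist (x (seq k.castSucc)) (x (seq k.succ)) ^ p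
          ≤ ((∑ l ∈ F k, t l ^ p) ^ (1 / p)) ^ p :=
            Real.rpow_le_rpow dist_nonneg h1 (le_of_lt hppos)
        _ = ∑ l ∈ F k, t l ^ p := by rw [one_div, Real.rpow_inv_rpow hs0 hp0]
    have hdisj : (↑(Finset.univ : Finset (Fin m)) : Set (Fin m)).PairwiseDisjoint F := by
      intro a _ b _ hab
      have key : ∀ a b : Fin m, a < b → Disjoint (F a) (F b) := by
        intro a b h
        rw [Finset.disjoint_left]
        intro l hla hlb
        simp only [hFdef, Finset.mem_filter, Finset.mem_univ, true_and] at hla hlb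
        have hab' : a.succ ≤ b.castSucc := by
          rw [Fin.le_def, Fin.val_succ, Fin.coe_castSucc]
          exact h
        have := hmono.monotone hab'
        rw [Fin.le_def] at this
        omega
      rcases lt_or_gt_of_ne hab with h | h
      · exact key a b h
      · exact (key b a h).symm
    have hsum_le : ∑ k : Fin m, dist (x (seq k.castSucc)) (x (seq k.succ)) ^ p
        ≤ ∑ l : Fin n, t l ^ p := by
      calc ∑ k : Fin m, dist (x (seq k.castSucc)) (x (seq k.succ)) ^ p
          ≤ ∑ k : Fin m, ∑ l ∈ F k, t l ^ p := Finset.sum_le_sum fun k _ => hle k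
        _ = ∑ l ∈ Finset.univ.biUnion F, t l ^ p := (Finset.sum_biUnion hdisj).symm
        _ ≤ ∑ l : Fin n, t l ^ p :=
            Finset.sum_le_sum_of_subset_of_nonneg (Finset.subset_univ _)
              fun l _ _ => Real.rpow_nonneg (ht0 l) p
    refine le_trans ?_ htr
    exact Real.rpow_le_rpow
      (Finset.sum_nonneg fun k _ => Real.rpow_nonneg dist_nonneg p) hsum_le (by positivity)
end
end

section
/- Let ν be a distance matrix norm, L ⊆ ℝ a left-infinite interval, a, b ≥ 0, and f : X → Y an L-locally (a,b)-Lipschitz map between metric spaces. If x₀, …, x_n ∈ X satisfy dist(x_i, x_j) ∈ L for all 0 ≤ i < j ≤ n, then w_ν(f(x₀), …, f(x_n)) ≤ a · w_ν(x₀, …, x_n) + b · C_n(ν). -/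
noncomputable section

open scoped BigOperators

/-- A left-infinite interval: `(-∞, r)`, `(-∞, r]`, or `ℝ`. -/
def IsLeftInfinite (L : Set ℝ) : Prop :=
  (∃ r : ℝ, L = Set.Iio r) ∨ (∃ r : ℝ, L = Set.Iic r) ∨ L = Set.univ

/-- If `f` is `L`-locally `(a,b)`-Lipschitz and all pairwise distances in the tuple `x`
belong to `L`, then `w_ν(f ∘ x) ≤ a * w_ν(x) + b * C_n(ν)`. -/
theorem wt_map_le_of_locallyLipschitz (ν : ∀ n : ℕ, (Fin (n + 1) → Fin (n + 1) → ℝ) → ℝ)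
    (hν : IsDistMatrixNorm ν) {X Y : Type*} [MetricSpace X] [MetricSpace Y]
    (L : Set ℝ) (hL : IsLeftInfinite L) (a b : ℝ) (ha : 0 ≤ a) (hb : 0 ≤ b) (f : X → Y)
    (hf : ∀ x x' : X, dist x x' ∈ L → dist (f x) (f x') ≤ a * dist x x' + b)
    (n : ℕ) (x : Fin (n + 1) → X)
    (hx : ∀ i j : Fin (n + 1), i < j → dist (x i) (x j) ∈ L) :
    wt ν (fun i => f (x i)) ≤ a * wt ν x + b * matC ν n := by
  have hDx : IsDistMatrix (fun i j => dist (x i) (x j)) :=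
    ⟨fun i => dist_self _, fun i j => dist_nonneg, fun i j => dist_comm _ _,
      fun i j k => dist_triangle _ _ _⟩
  have hDfx : IsDistMatrix (fun i j => dist (f (x i)) (f (x j))) :=
    ⟨fun i => dist_self _, fun i j => dist_nonneg, fun i j => dist_comm _ _,
      fun i j k => dist_triangle _ _ _⟩
  have hE : IsDistMatrix (matE n) := by
    refine ⟨fun i => by simp [matE], fun i j => ?_, fun i j => ?_, fun i j k => ?_⟩
    · unfold matE; split <;> norm_num
    · unfold matE; by_cases h : i = j <;> simp [h, eq_comm]
    · unfold matE
      by_cases hik : i = k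
      · simp [hik]
        split <;> split <;> norm_num
      · simp [hik]
        by_cases hij : i = j
        · subst hij; simp [hik]
        · simp [hij]
          split <;> norm_num
  have hsmul : ∀ (c : ℝ), 0 ≤ c → ∀ D : Fin (n+1) → Fin (n+1) → ℝ, IsDistMatrix D →
      IsDistMatrix (fun i j => c * D i j) := by
    intro c hc D ⟨h1, h2, h3, h4⟩
    refine ⟨fun i => by simp [h1], fun i j => mul_nonneg hc (h2 i j),
      fun i j => by dsimp only; rw [h3 i j], fun i j k => ?_⟩
    rw [← mul_add]
    exact mul_le_mul_of_nonneg_left (h4 i j k) hc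
  have haD := hsmul a ha _ hDx
  have hbE := hsmul b hb _ hE
  have hentry : ∀ i j, dist (f (x i)) (f (x j)) ≤ a * dist (x i) (x j) + b * matE n i j := by
    intro i j
    rcases lt_trichotomy i j with h | h | h
    · have := hf _ _ (hx i j h)
      simpa [matE, ne_of_lt h, Fin.ne_of_lt h] using this
    · subst h; simp [matE, ha]
    · have := hf _ _ (hx j i h)
      rw [dist_comm (x j) (x i)] at this
      rw [dist_comm (f (x j)) (f (x i))] at this
      simpa [matE, (Fin.ne_of_gt h : i ≠ j)] using this
  have h1 : wt ν (fun i => f (x i)) ≤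
      ν n (fun i j => a * dist (x i) (x j) + b * matE n i j) :=
    hν.mono n _ _ hDfx (by
      refine ⟨fun i => by simp [matE], fun i j => add_nonneg (mul_nonneg ha dist_nonneg)
        (mul_nonneg hb (hE.2.1 i j)), fun i j => by dsimp only; rw [dist_comm, hE.2.2.1 i j],
        fun i j k => ?_⟩
      have := hsmul a ha _ hDx
      have h2 := this.2.2.2 i j k
      have h3 := hbE.2.2.2 i j k
      dsimp at h2 h3 ⊢
      linarith) hentry
  have h2 : ν n (fun i j => a * dist (x i) (x j) + b * matE n i j) ≤
      ν n (fun i j => a * dist (x i) (x j)) + ν n (fun i j => b * matE n i j) :=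
    hν.add_le n _ _ haD hbE
  have h3 := hν.smul_eq n a ha _ hDx
  have h4 := hν.smul_eq n b hb _ hE
  unfold wt matC at *
  linarith
end
end

section
/- Let ν be a distance matrix norm, X a metric space, L ⊆ ℝ a left-infinite interval, and (U_i)_{i∈I} a family of subsets of X. For x, y ∈ X let Ell^ν_L(x, y) = {a ∈ X : w_ν(x, a, y) ∈ L}. Assume that for all x, y ∈ X with dist(x, y) ∈ L there exists i ∈ I with Ell^ν_L(x, y) ⊆ U_i. Then for every n ≥ 1 and every tuple x₀, …, x_n ∈ X with w_ν(x₀, …, x_n) ∈ L, there exists i ∈ I such that x_k ∈ U_i for all 0 ≤ k ≤ n. -/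
noncomputable section

open scoped BigOperators

/- ### Auxiliary lemmas -/

lemma aux_isDistMatrix_comp {n m : ℕ} {D : Fin (n+1) → Fin (n+1) → ℝ} (hD : IsDistMatrix D)
    (f : Fin (m+1) → Fin (n+1)) : IsDistMatrix (fun k l => D (f k) (f l)) := by
  obtain ⟨h1, h2, h3, h4⟩ := hD
  exact ⟨fun i => h1 _, fun i j => h2 _ _, fun i j => h3 _ _, fun i j k => h4 _ _ _⟩

lemma aux_strictMono_fin_id {n : ℕ} (f : Fin (n+1) → Fin (n+1)) (hf : StrictMono f)
    (k : Fin (n+1)) : f k = k := by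
  have hs : Function.Surjective f := Finite.injective_iff_surjective.mp hf.injective
  have h2 : f k = (StrictMono.orderIsoOfSurjective f hf hs) k := by
    rw [StrictMono.coe_orderIsoOfSurjective]
  rw [h2]
  exact Fin.ext (Fin.coe_orderIso_apply _ k)

lemma aux_nu_comp_le (ν : ∀ n : ℕ, (Fin (n + 1) → Fin (n + 1) → ℝ) → ℝ)
    (hν : IsDistMatrixNorm ν) :
    ∀ n m : ℕ, m ≤ n → ∀ f : Fin (m+1) → Fin (n+1), StrictMono f →
    ∀ D : Fin (n+1) → Fin (n+1) → ℝ, IsDistMatrix D →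
      ν m (fun k l => D (f k) (f l)) ≤ ν n D := by
  intro n
  induction n with
  | zero =>
    intro m hm f hf D hD
    interval_cases m
    have : ∀ k, f k = k := aux_strictMono_fin_id f hf
    have he : (fun k l => D (f k) (f l)) = D := by
      funext k l; rw [this, this]
    rw [he]
  | succ n ih =>
    intro m hm f hf D hD
    by_cases hmn : m = n + 1
    · subst hmn
      have : ∀ k, f k = k := aux_strictMono_fin_id f hf
      have he : (fun k l => D (f k) (f l)) = D := by
        funext k l; rw [this, this]
      rw [he]
    · have hm' : m ≤ n := by omega
      -- f is not surjective
      have hns : ∃ j : Fin (n+2), ∀ k, f k ≠ j := by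
        by_contra hc
        push_neg at hc
        have hs : Function.Surjective f := fun j => by
          obtain ⟨k, hk⟩ := hc j; exact ⟨k, hk⟩
        have := Fintype.card_le_of_surjective f hs
        simp at this; omega
      obtain ⟨j, hj⟩ := hns
      have hex : ∀ k, ∃ z, j.succAbove z = f k := fun k => Fin.exists_succAbove_eq (hj k)
      set g : Fin (m+1) → Fin (n+1) := fun k => (hex k).choose with hg_def
      have hgs : ∀ k, j.succAbove (g k) = f k := fun k => (hex k).choose_spec
      have hg : StrictMono g := by
        intro a b hab
        have h1 := hf hab
        rw [← hgs a, ← hgs b] at h1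
        exact (Fin.succAbove_lt_succAbove_iff).mp h1
      have he : (fun k l => D (f k) (f l))
          = (fun k l => (fun p q => D (j.succAbove p) (j.succAbove q)) (g k) (g l)) := by
        funext k l; rw [← hgs k, ← hgs l]
      rw [he]
      calc ν m (fun k l => (fun p q => D (j.succAbove p) (j.succAbove q)) (g k) (g l))
          ≤ ν n (fun p q => D (j.succAbove p) (j.succAbove q)) :=
            ih m hm' g hg _ (aux_isDistMatrix_comp hD _)
        _ ≤ ν (n + 1) D := hν.face_le n D hD j

lemma aux_left_infinite_closed {L : Set ℝ} (hL : IsLeftInfinite L) {a b : ℝ}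
    (hab : a ≤ b) (hb : b ∈ L) : a ∈ L := by
  rcases hL with ⟨r, rfl⟩ | ⟨r, rfl⟩ | rfl
  · exact lt_of_le_of_lt hab hb
  · exact le_trans hab hb
  · trivial


/-- If every `ν`-ellipse `Ell^ν_L(x, y) = {a | w_ν(x, a, y) ∈ L}` with `dist x y ∈ L` is
contained in some member of the family `U`, then every tuple of `ν`-weight in `L` is
contained in some member of the family. -/
theorem exists_mem_of_wt_mem (ν : ∀ n : ℕ, (Fin (n + 1) → Fin (n + 1) → ℝ) → ℝ)
    (hν : IsDistMatrixNorm ν) {X : Type*} [MetricSpace X]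
    (L : Set ℝ) (hL : IsLeftInfinite L) {I : Type*} (U : I → Set X)
    (h : ∀ x y : X, dist x y ∈ L → ∃ i : I, {a : X | wt ν ![x, a, y] ∈ L} ⊆ U i)
    (n : ℕ) (hn : 1 ≤ n) (x : Fin (n + 1) → X) (hx : wt ν x ∈ L) :
    ∃ i : I, ∀ k : Fin (n + 1), x k ∈ U i := by
  obtain ⟨m, rfl⟩ : ∃ m, n = m + 1 := ⟨n - 1, by omega⟩
  set D : Fin (m+2) → Fin (m+2) → ℝ := fun i j => dist (x i) (x j) with hD_def
  have hD : IsDistMatrix D :=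
    ⟨fun i => dist_self _, fun i j => dist_nonneg, fun i j => dist_comm _ _,
      fun i j k => dist_triangle _ _ _⟩
  set p : Fin (m+2) := 0 with hp
  set q : Fin (m+2) := Fin.last (m+1) with hq
  -- the pair map
  set f2 : Fin 2 → Fin (m+2) := ![p, q] with hf2
  have hpq : p < q := by
    simp [hp, hq, Fin.lt_def]
  have hf2s : StrictMono f2 := by
    intro a b hab
    fin_cases a <;> fin_cases b
    · exact absurd hab (lt_irrefl _)
    · simpa [hf2] using hpq
    · exact absurd hab (by decide)
    · exact absurd hab (lt_irrefl _)
  -- the pair matrix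
  have hpairmat : (fun i j => dist (![x p, x q] i) (![x p, x q] j))
      = fun k l => D (f2 k) (f2 l) := by
    funext k l
    fin_cases k <;> fin_cases l <;> simp [hf2, hD_def]
  -- pair weight equals the distance
  have hEdist : IsDistMatrix (matE 1) := by
    refine ⟨fun i => by simp [matE], fun i j => ?_, fun i j => by simp [matE, eq_comm], ?_⟩
    · simp only [matE]; split <;> norm_num
    · intro i j k
      by_cases hik : i = k
      · simp only [matE, if_pos hik]
        split_ifs <;> norm_num
      · by_cases hij : i = j
        · subst hij
          simp [matE, hik]
        · simp only [matE, if_neg hik, if_neg hij]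
          split_ifs <;> norm_num
  have hpairwt : ν 1 (fun k l => D (f2 k) (f2 l)) = dist (x p) (x q) := by
    have he : (fun k l => D (f2 k) (f2 l))
        = fun i j => dist (x p) (x q) * matE 1 i j := by
      funext i j
      fin_cases i <;> fin_cases j <;>
        simp [hf2, hD_def, matE, dist_comm]
    rw [he, hν.smul_eq 1 _ dist_nonneg _ hEdist, hν.normalized, mul_one]
  -- dist (x p) (x q) ∈ L
  have hple : ν 1 (fun k l => D (f2 k) (f2 l)) ≤ ν (m+1) D :=
    aux_nu_comp_le ν hν (m+1) 1 (by omega) f2 hf2s D hD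
  have hxD : ν (m+1) D ∈ L := hx
  have hdist_mem : dist (x p) (x q) ∈ L := by
    rw [← hpairwt]
    exact aux_left_infinite_closed hL hple hxD
  obtain ⟨i, hi⟩ := h (x p) (x q) hdist_mem
  refine ⟨i, fun k => ?_⟩
  refine hi ?_
  simp only [Set.mem_setOf_eq]
  unfold wt
  -- triple matrix as a composition
  have htriple : ∀ f3 : Fin 3 → Fin (m+2), f3 = ![p, k, q] →
      (fun i j => dist (![x p, x k, x q] i) (![x p, x k, x q] j))
        = fun a b => D (f3 a) (f3 b) := by
    intro f3 hf3
    funext a b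
    fin_cases a <;> fin_cases b <;> simp [hf3, hD_def]
  by_cases hk0 : k = p
  · -- degenerate: triple matrix is a degeneracy of the pair matrix
    have he : (fun i j => dist (![x p, x k, x q] i) (![x p, x k, x q] j))
        = fun a b => (fun s t => D (f2 s) (f2 t)) ((0 : Fin 2).predAbove a)
            ((0 : Fin 2).predAbove b) := by
      funext a b
      fin_cases a <;> fin_cases b <;> simp [hf2, hD_def, hk0] <;> rfl
    rw [he, hν.degen_eq 1 _ (aux_isDistMatrix_comp hD f2) 0, hpairwt]
    exact hdist_mem
  · by_cases hkq : k = q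
    · have he : (fun i j => dist (![x p, x k, x q] i) (![x p, x k, x q] j))
          = fun a b => (fun s t => D (f2 s) (f2 t)) ((1 : Fin 2).predAbove a)
              ((1 : Fin 2).predAbove b) := by
        funext a b
        fin_cases a <;> fin_cases b <;> simp [hf2, hD_def, hkq] <;> rfl
      rw [he, hν.degen_eq 1 _ (aux_isDistMatrix_comp hD f2) 1, hpairwt]
      exact hdist_mem
    · -- nondegenerate: use the strict mono lemma
      set f3 : Fin 3 → Fin (m+2) := ![p, k, q] with hf3
      have hk0' : p < k := by
        rcases lt_or_eq_of_le (Fin.zero_le k) with hlt | heq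
        · exact hlt
        · exact absurd heq.symm hk0
      have hkq' : k < q := by
        rcases lt_or_eq_of_le (Fin.le_last k) with hlt | heq
        · exact hlt
        · exact absurd heq hkq
      have hf3s : StrictMono f3 := by
        intro a b hab
        fin_cases a <;> fin_cases b
        · exact absurd hab (lt_irrefl _)
        · simpa [hf3] using hk0'
        · simpa [hf3] using lt_trans hk0' hkq'
        · exact absurd hab (by decide)
        · exact absurd hab (lt_irrefl _)
        · simpa [hf3] using hkq'
        · exact absurd hab (by decide)
        · exact absurd hab (by decide)
        · exact absurd hab (lt_irrefl _)
      have hm2 : 2 ≤ m + 1 := by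
        have h1 : (0 : ℕ) < k.val := hk0'
        have h2 : k.val < m + 1 := hkq'
        omega
      have hle : ν 2 (fun a b => D (f3 a) (f3 b)) ≤ ν (m+1) D :=
        aux_nu_comp_le ν hν (m+1) 2 hm2 f3 hf3s D hD
      rw [htriple f3 hf3]
      exact aux_left_infinite_closed hL hle hxD
end
end

section
/- Let p ≥ 1 be a real number and set c_p = 2^{1/p} / (2 + 2^{1/p}). Then: (i) for every triple x₀, x₁, x₂ ∈ S¹ such that the set {x₀, x₁, x₂} is not contained in any open semicircle, w_p(x₀, x₁, x₂) ≥ c_p; and (ii) there exist x₀, x₁, x₂ ∈ S¹ such that {x₀, x₁, x₂} is not contained in any open semicircle and w_p(x₀, x₁, x₂) = c_p. In particular, the infimum of w_p(x₀, x₁, x₂) over all triples not contained in any open semicircle equals c_p. -/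
noncomputable section

open scoped BigOperators

namespace LpwtAux

open Real Set Metric

lemma dist_coe_le (a b : ℝ) : dist (↑a : AddCircle (1:ℝ)) ↑b ≤ |a - b| := by
  rw [dist_eq_norm, ← AddCircle.coe_sub, AddCircle.norm_eq]
  simpa using round_le (a - b) 0

lemma dist_coe_eq (a b : ℝ) (h : |a - b| ≤ 1/2) :
    dist (↑a : AddCircle (1:ℝ)) ↑b = |a - b| := by
  rw [dist_eq_norm, ← AddCircle.coe_sub]
  exact (AddCircle.norm_coe_eq_abs_iff 1 one_ne_zero).mpr (by simpa using h)

lemma coe_add_one (a : ℝ) : ((a + 1 : ℝ) : AddCircle (1:ℝ)) = ↑a :=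
  AddCircle.coe_add_period 1 a

lemma sum_lt_of_ball (x₀ x₁ x₂ : AddCircle (1:ℝ))
    (h : ∃ c : AddCircle (1:ℝ), ({x₀, x₁, x₂} : Set (AddCircle (1:ℝ))) ⊆ Metric.ball c (1/4)) :
    dist x₀ x₁ + dist x₁ x₂ + dist x₀ x₂ < 1 := by
  haveI : Fact ((0:ℝ) < 1) := ⟨one_pos⟩
  obtain ⟨c, hc⟩ := h
  obtain ⟨m, _, rfl⟩ := AddCircle.eq_coe_Ico c
  obtain ⟨a₀, _, rfl⟩ := AddCircle.eq_coe_Ico x₀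
  obtain ⟨a₁, _, rfl⟩ := AddCircle.eq_coe_Ico x₁
  obtain ⟨a₂, _, rfl⟩ := AddCircle.eq_coe_Ico x₂
  have key : ∀ a : ℝ, dist (↑a : AddCircle (1:ℝ)) ↑m < 1/4 →
      ∃ r : ℝ, ((r : AddCircle (1:ℝ)) = ↑a) ∧ |r - m| < 1/4 := by
    intro a ha
    refine ⟨a - round (a - m), ?_, ?_⟩
    · push_cast [AddCircle.coe_sub]
      rw [show (((round (a-m) : ℝ)) : AddCircle (1:ℝ)) = 0 from ?_, sub_zero]
      rw [QuotientAddGroup.eq_zero_iff]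
      exact AddSubgroup.intCast_mem_zmultiples_one _
    · rw [dist_eq_norm, ← AddCircle.coe_sub, AddCircle.norm_eq] at ha
      rw [show a - round (a-m) - m = a - m - round (a-m) by ring]
      simpa using ha
  obtain ⟨r₀, e₀, b₀⟩ := key a₀ (by simpa using hc (show _ ∈ _ by left; rfl))
  obtain ⟨r₁, e₁, b₁⟩ := key a₁ (by simpa using hc (show _ ∈ _ by right; left; rfl))
  obtain ⟨r₂, e₂, b₂⟩ := key a₂ (by simpa using hc (show _ ∈ _ by right; right; rfl))
  have d01 : dist (↑a₀ : AddCircle (1:ℝ)) ↑a₁ ≤ |r₀ - r₁| := by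
    rw [← e₀, ← e₁]; exact dist_coe_le _ _
  have d12 : dist (↑a₁ : AddCircle (1:ℝ)) ↑a₂ ≤ |r₁ - r₂| := by
    rw [← e₁, ← e₂]; exact dist_coe_le _ _
  have d02 : dist (↑a₀ : AddCircle (1:ℝ)) ↑a₂ ≤ |r₀ - r₂| := by
    rw [← e₀, ← e₂]; exact dist_coe_le _ _
  rw [abs_sub_lt_iff] at b₀ b₁ b₂
  have : |r₀ - r₁| + |r₁ - r₂| + |r₀ - r₂| < 1 := by
    rcases abs_cases (r₀ - r₁) with ⟨h1, _⟩ | ⟨h1, _⟩ <;>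
      rcases abs_cases (r₁ - r₂) with ⟨h2, _⟩ | ⟨h2, _⟩ <;>
        rcases abs_cases (r₀ - r₂) with ⟨h3, _⟩ | ⟨h3, _⟩ <;>
          rw [h1, h2, h3] <;> linarith [b₀.1, b₀.2, b₁.1, b₁.2, b₂.1, b₂.2]
  linarith

lemma sorted_case (u v w : ℝ) (hu0 : 0 ≤ u) (hw1 : w < 1) (huv : u ≤ v) (hvw : v ≤ w)
    (hsum : dist (↑u : AddCircle (1:ℝ)) ↑v + dist (↑v : AddCircle (1:ℝ)) ↑w +
      dist (↑u : AddCircle (1:ℝ)) ↑w < 1) :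
    ∃ m : ℝ, dist (↑u : AddCircle (1:ℝ)) ↑m < 1/4 ∧ dist (↑v : AddCircle (1:ℝ)) ↑m < 1/4 ∧
      dist (↑w : AddCircle (1:ℝ)) ↑m < 1/4 := by
  by_cases h3 : w - u < 1/2
  · refine ⟨(u + w)/2, ?_, ?_, ?_⟩ <;>
      refine lt_of_le_of_lt (dist_coe_le _ _) ?_ <;>
        (rw [abs_sub_lt_iff]; constructor) <;> linarith
  by_cases h1 : 1/2 < v - u
  · refine ⟨(v + u + 1)/2, ?_, ?_, ?_⟩
    · rw [← coe_add_one u]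
      refine lt_of_le_of_lt (dist_coe_le _ _) ?_
      rw [abs_sub_lt_iff]; constructor <;> linarith
    all_goals refine lt_of_le_of_lt (dist_coe_le _ _) ?_
    all_goals rw [abs_sub_lt_iff]; constructor <;> linarith
  by_cases h2 : 1/2 < w - v
  · refine ⟨(w + v + 1)/2, ?_, ?_, ?_⟩
    · rw [← coe_add_one u]
      refine lt_of_le_of_lt (dist_coe_le _ _) ?_
      rw [abs_sub_lt_iff]; constructor <;> linarith
    · rw [← coe_add_one v]
      refine lt_of_le_of_lt (dist_coe_le _ _) ?_
      rw [abs_sub_lt_iff]; constructor <;> linarith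
    · refine lt_of_le_of_lt (dist_coe_le _ _) ?_
      rw [abs_sub_lt_iff]; constructor <;> linarith
  · exfalso
    push_neg at h1 h2 h3
    have e1 : dist (↑u : AddCircle (1:ℝ)) ↑v = v - u := by
      rw [dist_coe_eq u v (by rw [abs_of_nonpos (by linarith)]; linarith),
        abs_of_nonpos (by linarith), neg_sub]
    have e2 : dist (↑v : AddCircle (1:ℝ)) ↑w = w - v := by
      rw [dist_coe_eq v w (by rw [abs_of_nonpos (by linarith)]; linarith),
        abs_of_nonpos (by linarith), neg_sub]
    have e3 : dist (↑u : AddCircle (1:ℝ)) ↑w = 1 - (w - u) := by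
      rw [← coe_add_one u,
        dist_coe_eq (u+1) w (by rw [abs_of_nonneg (by linarith)]; linarith),
        abs_of_nonneg (by linarith)]
      ring
    linarith

lemma ball_of_sum_lt (x₀ x₁ x₂ : AddCircle (1:ℝ))
    (h : dist x₀ x₁ + dist x₁ x₂ + dist x₀ x₂ < 1) :
    ∃ c : AddCircle (1:ℝ), ({x₀, x₁, x₂} : Set (AddCircle (1:ℝ))) ⊆ Metric.ball c (1/4) := by
  haveI : Fact ((0:ℝ) < 1) := ⟨one_pos⟩
  obtain ⟨a₀, ha₀, rfl⟩ := AddCircle.eq_coe_Ico x₀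
  obtain ⟨a₁, ha₁, rfl⟩ := AddCircle.eq_coe_Ico x₁
  obtain ⟨a₂, ha₂, rfl⟩ := AddCircle.eq_coe_Ico x₂
  obtain ⟨h₀l, h₀r⟩ := ha₀
  obtain ⟨h₁l, h₁r⟩ := ha₁
  obtain ⟨h₂l, h₂r⟩ := ha₂
  have dc : ∀ a b : ℝ, dist (↑a : AddCircle (1:ℝ)) ↑b = dist (↑b : AddCircle (1:ℝ)) ↑a :=
    fun a b => dist_comm _ _
  have sub_of : ∀ m : ℝ, dist (↑a₀ : AddCircle (1:ℝ)) ↑m < 1/4 →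
      dist (↑a₁ : AddCircle (1:ℝ)) ↑m < 1/4 → dist (↑a₂ : AddCircle (1:ℝ)) ↑m < 1/4 →
      ∃ c : AddCircle (1:ℝ),
        ({(↑a₀ : AddCircle (1:ℝ)), ↑a₁, ↑a₂} : Set (AddCircle (1:ℝ))) ⊆ Metric.ball c (1/4) := by
    intro m h0 h1 h2
    refine ⟨↑m, ?_⟩
    intro y hy
    simp only [Set.mem_insert_iff, Set.mem_singleton_iff] at hy
    rcases hy with rfl | rfl | rfl <;> rw [Metric.mem_ball] <;> assumption
  rcases le_total a₀ a₁ with s01 | s01 <;> rcases le_total a₁ a₂ with s12 | s12 <;>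
    rcases le_total a₀ a₂ with s02 | s02
  · obtain ⟨m, b0, b1, b2⟩ := sorted_case a₀ a₁ a₂ h₀l h₂r s01 s12 (by linarith)
    exact sub_of m b0 b1 b2
  · obtain ⟨m, b0, b1, b2⟩ := sorted_case a₀ a₁ a₂ h₀l h₂r s01 s12 (by linarith)
    exact sub_of m b0 b1 b2
  · obtain ⟨m, b0, b1, b2⟩ := sorted_case a₀ a₂ a₁ h₀l h₁r s02 s12 (by linarith [dc a₁ a₂])
    exact sub_of m b0 b2 b1
  · obtain ⟨m, b0, b1, b2⟩ := sorted_case a₂ a₀ a₁ h₂l h₁r s02 s01 (by linarith [dc a₁ a₂, dc a₀ a₂])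
    exact sub_of m b1 b2 b0
  · obtain ⟨m, b0, b1, b2⟩ := sorted_case a₁ a₀ a₂ h₁l h₂r s01 s02 (by linarith [dc a₀ a₁])
    exact sub_of m b1 b0 b2
  · obtain ⟨m, b0, b1, b2⟩ := sorted_case a₁ a₂ a₀ h₁l h₀r s12 s02 (by linarith [dc a₀ a₁, dc a₀ a₂])
    exact sub_of m b2 b0 b1
  · obtain ⟨m, b0, b1, b2⟩ := sorted_case a₂ a₁ a₀ h₂l h₀r s12 s01 (by linarith [dc a₀ a₂, dc a₁ a₂, dc a₀ a₁])
    exact sub_of m b2 b1 b0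
  · obtain ⟨m, b0, b1, b2⟩ := sorted_case a₂ a₁ a₀ h₂l h₀r s12 s01 (by linarith [dc a₀ a₂, dc a₁ a₂, dc a₀ a₁])
    exact sub_of m b2 b1 b0

lemma lpwt_three {X : Type*} [PseudoMetricSpace X] (p : ℝ) (hp : 1 ≤ p) (x : Fin (2+1) → X) :
    lpwt p x = max (dist (x 0) (x 2))
      ((dist (x 0) (x 1) ^ p + dist (x 1) (x 2) ^ p) ^ (1/p)) := by
  have hp0 : (0:ℝ) < p := lt_of_lt_of_le one_pos hp
  have hpne : p ≠ 0 := ne_of_gt hp0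
  have h1p : (0:ℝ) ≤ 1/p := by positivity
  have hdd : ∀ d : ℝ, 0 ≤ d → (d ^ p) ^ (1/p) = d := fun d hd => by
    rw [← Real.rpow_mul hd, mul_one_div_cancel hpne, Real.rpow_one]
  set M := max (dist (x 0) (x 2))
      ((dist (x 0) (x 1) ^ p + dist (x 1) (x 2) ^ p) ^ (1/p)) with hM
  have hle : ∀ a b : Fin 3, a < b → dist (x a) (x b) ≤ M := by
    have t01 : dist (x 0) (x 1) ≤ M := by
      refine le_trans ?_ (le_max_right _ _)
      nth_rewrite 1 [← hdd _ dist_nonneg]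
      exact Real.rpow_le_rpow (Real.rpow_nonneg dist_nonneg p)
        (le_add_of_nonneg_right (Real.rpow_nonneg dist_nonneg p)) h1p
    have t12 : dist (x 1) (x 2) ≤ M := by
      refine le_trans ?_ (le_max_right _ _)
      nth_rewrite 1 [← hdd _ dist_nonneg]
      exact Real.rpow_le_rpow (Real.rpow_nonneg dist_nonneg p)
        (le_add_of_nonneg_left (Real.rpow_nonneg dist_nonneg p)) h1p
    intro a b hab
    fin_cases a <;> fin_cases b <;> simp_all
  have ub : ∀ v ∈ { v : ℝ | ∃ (m : ℕ) (i : Fin (m + 1) → Fin (2 + 1)), 0 < m ∧ StrictMono i ∧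
      v = (∑ k : Fin m, dist (x (i k.castSucc)) (x (i k.succ)) ^ p) ^ (1 / p) }, v ≤ M := by
    rintro v ⟨m, i, hm, hmono, rfl⟩
    have hcard : m + 1 ≤ 3 := by
      simpa using Fintype.card_le_of_injective i hmono.injective
    have hm2 : m ≤ 2 := by omega
    interval_cases m
    · rw [Fin.sum_univ_one, Fin.castSucc_zero, Fin.succ_zero_eq_one, hdd _ dist_nonneg]
      exact hle _ _ (hmono (show (0:Fin 2) < 1 by decide))
    · have h01 := hmono (show (0:Fin 3) < 1 by decide)
      have h12 := hmono (show (1:Fin 3) < 2 by decide)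
      have l0 := (i 0).isLt
      have l1 := (i 1).isLt
      have l2 := (i 2).isLt
      simp only [Fin.lt_def] at h01 h12
      have e0 : i 0 = 0 := by apply Fin.ext; simp only [Fin.val_zero]; omega
      have e1 : i 1 = 1 := by apply Fin.ext; simp only [Fin.val_one]; omega
      have e2 : i 2 = 2 := by apply Fin.ext; simp only [Fin.val_two]; omega
      rw [Fin.sum_univ_two, Fin.castSucc_zero, Fin.succ_zero_eq_one, Fin.castSucc_one,
        Fin.succ_one_eq_two, e0, e1, e2]
      exact le_max_right _ _
  have mem1 : dist (x 0) (x 2) ∈ { v : ℝ | ∃ (m : ℕ) (i : Fin (m + 1) → Fin (2 + 1)),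
      0 < m ∧ StrictMono i ∧
      v = (∑ k : Fin m, dist (x (i k.castSucc)) (x (i k.succ)) ^ p) ^ (1 / p) } := by
    refine ⟨1, ![0, 2], one_pos, by decide, ?_⟩
    rw [Fin.sum_univ_one, Fin.castSucc_zero, Fin.succ_zero_eq_one]
    simp only [Matrix.cons_val_zero, Matrix.cons_val_one, Matrix.head_cons]
    rw [hdd _ dist_nonneg]
  have mem2 : (dist (x 0) (x 1) ^ p + dist (x 1) (x 2) ^ p) ^ (1/p) ∈
      { v : ℝ | ∃ (m : ℕ) (i : Fin (m + 1) → Fin (2 + 1)), 0 < m ∧ StrictMono i ∧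
      v = (∑ k : Fin m, dist (x (i k.castSucc)) (x (i k.succ)) ^ p) ^ (1 / p) } := by
    refine ⟨2, id, two_pos, strictMono_id, ?_⟩
    rw [Fin.sum_univ_two, Fin.castSucc_zero, Fin.succ_zero_eq_one, Fin.castSucc_one,
      Fin.succ_one_eq_two]
    rfl
  have hbdd : BddAbove { v : ℝ | ∃ (m : ℕ) (i : Fin (m + 1) → Fin (2 + 1)),
      0 < m ∧ StrictMono i ∧
      v = (∑ k : Fin m, dist (x (i k.castSucc)) (x (i k.succ)) ^ p) ^ (1 / p) } :=
    ⟨M, fun v hv => ub v hv⟩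
  refine le_antisymm (Real.sSup_le ub (le_trans dist_nonneg (le_max_left _ _))) ?_
  exact max_le (le_csSup hbdd mem1) (le_csSup hbdd mem2)

lemma key_bound (p : ℝ) (hp : 1 ≤ p) (d01 d12 d02 : ℝ) (h01 : 0 ≤ d01) (h12 : 0 ≤ d12)
    (hsum : 1 ≤ d01 + d12 + d02) :
    (2:ℝ) ^ (1/p) / (2 + (2:ℝ) ^ (1/p)) ≤ max d02 ((d01 ^ p + d12 ^ p) ^ (1/p)) := by
  have hp0 : (0:ℝ) < p := lt_of_lt_of_le one_pos hp
  have hpne : p ≠ 0 := ne_of_gt hp0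
  set q : ℝ := (2:ℝ) ^ (1/p) with hq
  have hq0 : 0 < q := Real.rpow_pos_of_pos two_pos _
  have hA : (0:ℝ) < 2 + q := by linarith
  set u : ℝ := 1 / (2 + q) with hu
  have hu0 : 0 < u := by positivity
  have hcu : q / (2 + q) = q * u := by rw [hu]; ring
  by_cases hd : q / (2 + q) ≤ d02
  · exact le_trans hd (le_max_left _ _)
  push_neg at hd
  refine le_trans ?_ (le_max_right _ _)
  have h2u : 2 * u ≤ d01 + d12 := by
    have : 2 * u = 1 - q / (2 + q) := by rw [hu]; field_simp; ring
    linarith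
  have conv := (convexOn_rpow hp).2 (Set.mem_Ici.mpr h01) (Set.mem_Ici.mpr h12)
    (by norm_num : (0:ℝ) ≤ 1/2) (by norm_num : (0:ℝ) ≤ 1/2) (by norm_num)
  simp only [smul_eq_mul] at conv
  have humean : u ^ p ≤ (1/2) * d01 ^ p + (1/2) * d12 ^ p := by
    refine le_trans ?_ conv
    exact Real.rpow_le_rpow hu0.le (by linarith) hp0.le
  have hfin : 2 * u ^ p ≤ d01 ^ p + d12 ^ p := by linarith
  have key : (2 * u ^ p) ^ (1/p) = q * u := by
    rw [Real.mul_rpow (by norm_num) (Real.rpow_nonneg hu0.le p),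
      ← Real.rpow_mul hu0.le, mul_one_div_cancel hpne, Real.rpow_one, hq]
  rw [hcu, ← key]
  exact Real.rpow_le_rpow (by positivity) hfin (by positivity)

end LpwtAux

open LpwtAux in
/-- On the circle of perimeter one, the infimum of `w_p` over triples not contained in
any open semicircle is `2^{1/p} / (2 + 2^{1/p})`, and it is attained. -/
theorem lpwt_triple_not_in_semicircle (p : ℝ) (hp : 1 ≤ p) :
    (∀ x₀ x₁ x₂ : AddCircle (1 : ℝ),
        (¬ ∃ c : AddCircle (1 : ℝ),
            ({x₀, x₁, x₂} : Set (AddCircle (1 : ℝ))) ⊆ Metric.ball c (1 / 4)) →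
        (2 : ℝ) ^ (1 / p) / (2 + (2 : ℝ) ^ (1 / p)) ≤ lpwt p ![x₀, x₁, x₂]) ∧
    (∃ x₀ x₁ x₂ : AddCircle (1 : ℝ),
        (¬ ∃ c : AddCircle (1 : ℝ),
            ({x₀, x₁, x₂} : Set (AddCircle (1 : ℝ))) ⊆ Metric.ball c (1 / 4)) ∧
        lpwt p ![x₀, x₁, x₂] = (2 : ℝ) ^ (1 / p) / (2 + (2 : ℝ) ^ (1 / p))) ∧
    sInf { w : ℝ | ∃ x₀ x₁ x₂ : AddCircle (1 : ℝ),
        (¬ ∃ c : AddCircle (1 : ℝ),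
            ({x₀, x₁, x₂} : Set (AddCircle (1 : ℝ))) ⊆ Metric.ball c (1 / 4)) ∧
        w = lpwt p ![x₀, x₁, x₂] } = (2 : ℝ) ^ (1 / p) / (2 + (2 : ℝ) ^ (1 / p)) := by
  have hp0 : (0:ℝ) < p := lt_of_lt_of_le one_pos hp
  have hpne : p ≠ 0 := ne_of_gt hp0
  set q : ℝ := (2:ℝ) ^ (1/p) with hq
  have hq0 : 0 < q := Real.rpow_pos_of_pos two_pos _
  have hq1 : 1 ≤ q := by
    rw [hq, show (1:ℝ) = (2:ℝ) ^ (0:ℝ) by rw [Real.rpow_zero]]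
    exact Real.rpow_le_rpow_of_exponent_le one_le_two (by positivity)
  have hq2 : q ≤ 2 := by
    have h := Real.rpow_le_rpow_of_exponent_le one_le_two
      (show 1/p ≤ 1 by rw [div_le_one hp0]; exact hp)
    rw [Real.rpow_one] at h; exact h
  -- Part (i)
  have part1 : ∀ x₀ x₁ x₂ : AddCircle (1 : ℝ),
      (¬ ∃ c : AddCircle (1 : ℝ),
          ({x₀, x₁, x₂} : Set (AddCircle (1 : ℝ))) ⊆ Metric.ball c (1 / 4)) →
      q / (2 + q) ≤ lpwt p ![x₀, x₁, x₂] := by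
    intro x₀ x₁ x₂ hns
    have hsum : 1 ≤ dist x₀ x₁ + dist x₁ x₂ + dist x₀ x₂ := by
      by_contra hlt
      push_neg at hlt
      exact hns (ball_of_sum_lt x₀ x₁ x₂ hlt)
    rw [lpwt_three p hp ![x₀, x₁, x₂]]
    simp only [Matrix.cons_val_zero, Matrix.cons_val_one, Matrix.head_cons,
      Matrix.cons_val_two, Matrix.tail_cons]
    exact key_bound p hp _ _ _ dist_nonneg dist_nonneg hsum
  -- the witness
  have hA : (0:ℝ) < 2 + q := by linarith
  set u : ℝ := 1 / (2 + q) with hu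
  have hu0 : 0 < u := by positivity
  have hu4 : 1/4 ≤ u := by
    rw [hu]
    rw [div_le_div_iff₀ (by norm_num) hA]
    linarith
  have hu3 : u ≤ 1/3 := by
    rw [hu, div_le_div_iff₀ hA (by norm_num)]
    linarith
  have hqu : q * u = 1 - 2 * u := by
    rw [hu]; field_simp; ring
  have d01 : dist ((0:ℝ) : AddCircle (1:ℝ)) ((u:ℝ) : AddCircle (1:ℝ)) = u := by
    have habs : |(0:ℝ) - u| = u := by rw [zero_sub, abs_neg, abs_of_nonneg hu0.le]
    rw [dist_coe_eq 0 u (by rw [habs]; linarith), habs]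
  have d12 : dist ((u:ℝ) : AddCircle (1:ℝ)) ((2*u : ℝ) : AddCircle (1:ℝ)) = u := by
    have habs : |u - 2*u| = u := by
      rw [show u - 2*u = -u by ring, abs_neg, abs_of_nonneg hu0.le]
    rw [dist_coe_eq u (2*u) (by rw [habs]; linarith), habs]
  have d02 : dist ((0:ℝ) : AddCircle (1:ℝ)) ((2*u : ℝ) : AddCircle (1:ℝ)) = 1 - 2*u := by
    have habs : |0 + 1 - 2*u| = 1 - 2*u := by
      rw [abs_of_nonneg (by linarith)]; ring
    rw [show ((0:ℝ) : AddCircle (1:ℝ)) = (((0:ℝ) + 1 : ℝ) : AddCircle (1:ℝ)) from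
      (coe_add_one 0).symm,
      dist_coe_eq (0+1) (2*u) (by rw [habs]; linarith), habs]
  have part2main : lpwt p ![((0:ℝ) : AddCircle (1:ℝ)), ((u:ℝ) : AddCircle (1:ℝ)),
      ((2*u : ℝ) : AddCircle (1:ℝ))] = q / (2 + q) := by
    rw [lpwt_three p hp]
    simp only [Matrix.cons_val_zero, Matrix.cons_val_one, Matrix.head_cons,
      Matrix.cons_val_two, Matrix.tail_cons]
    rw [d01, d12, d02]
    have key : (u ^ p + u ^ p) ^ (1/p) = q * u := by
      rw [show u ^ p + u ^ p = 2 * u ^ p by ring,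
        Real.mul_rpow (by norm_num) (Real.rpow_nonneg hu0.le p),
        ← Real.rpow_mul hu0.le, mul_one_div_cancel hpne, Real.rpow_one, hq]
    rw [key, hqu, max_self, ← hqu, hu]
    ring
  have part2sum : ¬ ∃ c : AddCircle (1 : ℝ),
      ({((0:ℝ) : AddCircle (1:ℝ)), ((u:ℝ) : AddCircle (1:ℝ)),
        ((2*u : ℝ) : AddCircle (1:ℝ))} : Set (AddCircle (1 : ℝ))) ⊆ Metric.ball c (1 / 4) := by
    intro hball
    have := sum_lt_of_ball _ _ _ hball
    rw [d01, d12, d02] at this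
    linarith
  refine ⟨part1, ⟨_, _, _, part2sum, part2main⟩, ?_⟩
  -- Part (iii)
  refine le_antisymm (csInf_le ⟨q / (2+q), ?_⟩ ?_) (le_csInf ?_ ?_)
  · rintro w ⟨x₀, x₁, x₂, hns, rfl⟩
    exact part1 x₀ x₁ x₂ hns
  · exact ⟨_, _, _, part2sum, part2main.symm⟩
  · exact ⟨q / (2+q), _, _, _, part2sum, part2main.symm⟩
  · rintro w ⟨x₀, x₁, x₂, hns, rfl⟩
    exact part1 x₀ x₁ x₂ hns
end
end

section
/- Let π ≤ c < 2π and consider the arc X = {e^{ix} : 0 ≤ x ≤ c} ⊆ ℂ with the Euclidean (chordal) metric. Then for all x, x' ∈ [0, c] and all t, t' ∈ [0, c], if |e^{ix} − e^{ix'}| < |1 − e^{ic}|, then |e^{i x t / c} − e^{i x' t' / c}| ≤ |e^{ix} − e^{ix'}| + |t − t'|. In particular, the map h(e^{ix}, t) = e^{i x t / c} exhibits X as r-locally shortly contractible for every r ≤ |1 − e^{ic}| = dist(1, e^{ic}). -/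
lemma chord_abs (a b : ℝ) :
    ‖Complex.exp (Complex.I * (a : ℂ)) - Complex.exp (Complex.I * (b : ℂ))‖
      = 2 * |Real.sin ((a - b) / 2)| := by
  set m : ℝ := (a + b) / 2
  set d : ℝ := (a - b) / 2
  have e1 : Complex.I * (a : ℂ) = (m : ℂ) * Complex.I + (d : ℂ) * Complex.I := by
    simp only [m, d]; push_cast; ring
  have e2 : Complex.I * (b : ℂ) = (m : ℂ) * Complex.I + ((-d : ℝ) : ℂ) * Complex.I := by
    simp only [m, d]; push_cast; ring
  rw [e1, e2, Complex.exp_add, Complex.exp_add, ← mul_sub, norm_mul,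
    Complex.norm_exp_ofReal_mul_I, one_mul]
  have hF : Complex.exp ((d : ℂ) * Complex.I) - Complex.exp (((-d : ℝ) : ℂ) * Complex.I)
      = 2 * (Real.sin d : ℂ) * Complex.I := by
    rw [Complex.exp_mul_I, Complex.exp_mul_I, ← Complex.ofReal_cos, ← Complex.ofReal_sin,
      ← Complex.ofReal_cos, ← Complex.ofReal_sin, Real.cos_neg, Real.sin_neg]
    push_cast; ring
  rw [hF, norm_mul, norm_mul, Complex.norm_I, Complex.norm_two, Complex.norm_real, Real.norm_eq_abs, mul_one]

lemma sin_lip (p q : ℝ) : |Real.sin p - Real.sin q| ≤ |p - q| := by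
  rw [Real.sin_sub_sin, abs_mul, abs_mul]
  have h1 : |Real.sin ((p - q) / 2)| ≤ |p - q| / 2 := by
    have := Real.abs_sin_le_abs (x := (p - q) / 2)
    rwa [abs_div, abs_two] at this
  have h2 : |Real.cos ((p + q) / 2)| ≤ 1 := Real.abs_cos_le_one _
  rw [abs_two]
  have h3 := mul_le_mul h1 h2 (abs_nonneg _) (by positivity : (0 : ℝ) ≤ |p - q| / 2)
  nlinarith

lemma abs_sin_eq {u : ℝ} (h : |u| ≤ Real.pi) : |Real.sin u| = Real.sin |u| := by
  have h1 : |Real.sin u| = abs (Real.sin (abs u)) := by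
    rcases abs_cases u with ⟨e, _⟩ | ⟨e, _⟩
    · rw [e]
    · rw [e, Real.sin_neg, abs_neg]
  rw [h1, abs_of_nonneg (Real.sin_nonneg_of_nonneg_of_le_pi (abs_nonneg u) h)]

/-- The short-contraction estimate for the arc `{e^{ix} : 0 ≤ x ≤ c}` (`π ≤ c < 2π`):
if `|e^{ix} - e^{ix'}| < |1 - e^{ic}|`, then
`|e^{ixt/c} - e^{ix't'/c}| ≤ |e^{ix} - e^{ix'}| + |t - t'|` for `t, t' ∈ [0, c]`. -/
theorem arc_locally_short_contraction (c : ℝ) (hc : Real.pi ≤ c) (hc2 : c < 2 * Real.pi)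
    (x x' t t' : ℝ) (hx : x ∈ Set.Icc (0 : ℝ) c) (hx' : x' ∈ Set.Icc (0 : ℝ) c)
    (ht : t ∈ Set.Icc (0 : ℝ) c) (ht' : t' ∈ Set.Icc (0 : ℝ) c)
    (h : ‖Complex.exp (Complex.I * (x : ℂ)) - Complex.exp (Complex.I * (x' : ℂ))‖
        < ‖1 - Complex.exp (Complex.I * (c : ℂ))‖) :
    ‖Complex.exp (Complex.I * ((x * t / c : ℝ) : ℂ))
        - Complex.exp (Complex.I * ((x' * t' / c : ℝ) : ℂ))‖
      ≤ ‖Complex.exp (Complex.I * (x : ℂ))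
          - Complex.exp (Complex.I * (x' : ℂ))‖ + |t - t'| := by
  have hπ : (0 : ℝ) < Real.pi := Real.pi_pos
  have hcpos : (0 : ℝ) < c := lt_of_lt_of_le hπ hc
  obtain ⟨hx0, hxc⟩ := hx
  obtain ⟨hx'0, hx'c⟩ := hx'
  obtain ⟨ht0, htc⟩ := ht
  obtain ⟨ht'0, ht'c⟩ := ht'
  have h1 : (1 : ℂ) = Complex.exp (Complex.I * ((0 : ℝ) : ℂ)) := by simp
  rw [chord_abs, h1, chord_abs] at h
  rw [chord_abs, chord_abs]
  set d : ℝ := |x - x'| with hd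
  have hd0 : 0 ≤ d := abs_nonneg _
  have hdc : d ≤ c := by
    rw [hd, abs_sub_le_iff]; constructor <;> linarith
  have habs2 : |Real.sin ((x - x') / 2)| = Real.sin (d / 2) := by
    have e : |(x - x') / 2| = d / 2 := by rw [abs_div, abs_two, hd]
    rw [abs_sin_eq (by rw [e]; linarith), e]
  have hsin_c : |Real.sin ((0 - c) / 2)| = Real.sin (c / 2) := by
    have e : |(0 - c) / 2| = c / 2 := by
      rw [abs_div, abs_two, zero_sub, abs_neg, abs_of_pos hcpos]
    rw [abs_sin_eq (by rw [e]; linarith), e]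
  rw [habs2, hsin_c] at h
  have hsin_lt : Real.sin (d / 2) < Real.sin (c / 2) := by linarith
  -- key: d < 2π - c, hence d < π
  have hdlt : d < 2 * Real.pi - c := by
    by_contra hcon
    push_neg at hcon
    have : Real.sin (c / 2) ≤ Real.sin (d / 2) := by
      rcases le_or_gt (d / 2) (Real.pi / 2) with hcase | hcase
      · rw [← Real.sin_pi_sub (c / 2)]
        exact Real.sin_le_sin_of_le_of_le_pi_div_two (by linarith) hcase (by linarith)
      · rw [← Real.sin_pi_sub (c / 2), ← Real.sin_pi_sub (d / 2)]
        exact Real.sin_le_sin_of_le_of_le_pi_div_two (by linarith) (by linarith) (by linarith)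
    linarith
  have hdpi : d < Real.pi := by linarith
  -- main chain
  set p : ℝ := (x * t / c - x' * t' / c) / 2 with hp
  set q : ℝ := (x - x') * t / (2 * c) with hq
  have hpq : |p - q| ≤ |t - t'| / 2 := by
    have e : p - q = x' * (t - t') / (2 * c) := by
      rw [hp, hq]; field_simp; ring
    rw [e, abs_div, abs_mul, abs_of_pos (by linarith : (0 : ℝ) < 2 * c),
      abs_of_nonneg hx'0, div_le_div_iff₀ (by linarith) (by norm_num : (0 : ℝ) < 2)]
    nlinarith [abs_nonneg (t - t')]
  have step1 : |Real.sin p| ≤ |Real.sin q| + |t - t'| / 2 := by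
    have h2 := sin_lip p q
    have h3 := abs_sub_abs_le_abs_sub (Real.sin p) (Real.sin q)
    linarith
  have step2 : |Real.sin q| ≤ Real.sin (d / 2) := by
    have hqabs : |q| = d * t / (2 * c) := by
      rw [hq, abs_div, abs_mul, ← hd, abs_of_nonneg ht0,
        abs_of_pos (by linarith : (0 : ℝ) < 2 * c)]
    have hqle : |q| ≤ d / 2 := by
      rw [hqabs, div_le_div_iff₀ (by linarith) (by norm_num : (0 : ℝ) < 2)]
      nlinarith
    rw [abs_sin_eq (by linarith)]
    exact Real.sin_le_sin_of_le_of_le_pi_div_two (by linarith [abs_nonneg q])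
      (by linarith) hqle
  rw [habs2]
  linarith
end

section
/- Let X be a pseudometric space, ν a distance matrix norm, and r > 0. Let VR^ν_{<r} X be the simplicial set whose n-simplices are the tuples (x₀, …, x_n) ∈ X^{n+1} with w_ν(x₀, …, x_n) < r, with face maps deleting entries and degeneracy maps doubling entries. Let q : X → SeparationQuotient X be the quotient map onto the Kolmogorov (metric) quotient of X, which identifies points at distance 0 and satisfies dist(q x, q y) = dist(x, y). Then the induced simplicial map VR^ν_{<r} X → VR^ν_{<r} (SeparationQuotient X), (x₀, …, x_n) ↦ (q x₀, …, q x_n), has the right lifting property with respect to the boundary inclusion ∂Δ[n] → Δ[n] for every n ≥ 0; that is, it is a trivial Kan fibration. -/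
noncomputable section

open scoped BigOperators

open CategoryTheory Simplicial

/-- The `ν`-Vietoris-Rips simplicial set `VR^ν_{<r} X`: its `n`-simplices are the tuples
`(x₀,…,x_n)` with `w_ν < r` (closure under all monotone reindexings is built into the
carrier; by the theorem below this coincides with the condition `w_ν x < r`), and the
simplicial structure maps are given by precomposition (deleting/doubling points). -/
def VR (ν : ∀ n : ℕ, (Fin (n + 1) → Fin (n + 1) → ℝ) → ℝ) (X : Type) [PseudoMetricSpace X]
    (r : ℝ) : SSet where
  obj m := { x : Fin (m.unop.len + 1) → X //
    ∀ (k : ℕ) (f : Fin (k + 1) →o Fin (m.unop.len + 1)), wt ν (x ∘ f) < r }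
  map φ := TypeCat.ofHom fun x => ⟨x.1 ∘ φ.unop.toOrderHom, fun k g => x.2 k (φ.unop.toOrderHom.comp g)⟩
  map_id _ := rfl
  map_comp _ _ := rfl

/-- The simplicial map `VR^ν_{<r} X ⟶ VR^ν_{<r} (SeparationQuotient X)` induced by the
Kolmogorov quotient map. -/
def VRquot (ν : ∀ n : ℕ, (Fin (n + 1) → Fin (n + 1) → ℝ) → ℝ) (X : Type)
    [PseudoMetricSpace X] (r : ℝ) : VR ν X r ⟶ VR ν (SeparationQuotient X) r where
  app m := TypeCat.ofHom fun x => ⟨fun i => SeparationQuotient.mk (x.1 i), fun k f => by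
    have h := x.2 k f
    unfold wt at h ⊢
    have e : (fun i j : Fin (k + 1) =>
          dist (((fun i => SeparationQuotient.mk (x.1 i)) ∘ f) i)
            (((fun i => SeparationQuotient.mk (x.1 i)) ∘ f) j)) =
        fun i j : Fin (k + 1) => dist ((x.1 ∘ f) i) ((x.1 ∘ f) j) := by
      funext i j
      exact SeparationQuotient.dist_mk _ _
    rw [e]
    exact h⟩
  naturality _ _ _ := rfl


section Aux

open SimplexCategory

lemma IsDistMatrix.pullback {n m : ℕ} {D : Fin (n + 1) → Fin (n + 1) → ℝ}
    (hD : IsDistMatrix D) (g : Fin (m + 1) → Fin (n + 1)) :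
    IsDistMatrix (fun i j => D (g i) (g j)) :=
  ⟨fun _ => hD.1 _, fun _ _ => hD.2.1 _ _, fun _ _ => hD.2.2.1 _ _,
    fun _ _ _ => hD.2.2.2 _ _ _⟩

lemma isDistMatrix_dist {X : Type*} [PseudoMetricSpace X] {n : ℕ} (x : Fin (n + 1) → X) :
    IsDistMatrix (fun i j => dist (x i) (x j)) :=
  ⟨fun _ => dist_self _, fun _ _ => dist_nonneg, fun _ _ => dist_comm _ _,
    fun _ _ _ => dist_triangle _ _ _⟩

lemma nu_comp_le_aux {ν : ∀ n : ℕ, (Fin (n + 1) → Fin (n + 1) → ℝ) → ℝ}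
    (hν : IsDistMatrixNorm ν) :
    ∀ (N k n : ℕ), k + n ≤ N → ∀ (θ : (⦋k⦌ : SimplexCategory) ⟶ ⦋n⦌)
      (D : Fin (n + 1) → Fin (n + 1) → ℝ), IsDistMatrix D →
      ν k (fun i j => D (θ.toOrderHom i) (θ.toOrderHom j)) ≤ ν n D := by
  intro N
  induction N with
  | zero =>
    intro k n h θ D hD
    obtain ⟨rfl, rfl⟩ : k = 0 ∧ n = 0 := by omega
    have hid : θ = 𝟙 _ := by
      apply SimplexCategory.Hom.ext
      apply OrderHom.ext
      funext i
      exact Subsingleton.elim (α := Fin 1) _ _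
    subst hid
    exact le_of_eq rfl
  | succ N ih =>
    intro k n h θ D hD
    by_cases hinj : Function.Injective θ.toOrderHom
    · by_cases hsurj : Function.Surjective θ.toOrderHom
      · have hb : Function.Bijective θ.toOrderHom := ⟨hinj, hsurj⟩
        have hkn : k = n := by
          have := Fintype.card_of_bijective hb
          simp only [Fintype.card_fin, SimplexCategory.len_mk] at this
          omega
        subst hkn
        have : IsIso θ := isIso_of_bijective hb
        have hid : θ = 𝟙 _ := eq_id_of_isIso θ
        subst hid
        exact le_of_eq rfl
      · cases n with
        | zero => exact absurd (fun b => ⟨0, Subsingleton.elim (α := Fin 1) _ _⟩) hsurj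
        | succ m =>
          obtain ⟨i, θ', rfl⟩ := eq_comp_δ_of_not_surjective θ hsurj
          calc ν k (fun a b => D ((θ' ≫ δ i).toOrderHom a) ((θ' ≫ δ i).toOrderHom b))
              = ν k (fun a b => (fun p q => D (i.succAbove p) (i.succAbove q))
                  (θ'.toOrderHom a) (θ'.toOrderHom b)) := rfl
            _ ≤ ν m (fun p q => D (i.succAbove p) (i.succAbove q)) :=
                ih k m (by omega) θ' _ (hD.pullback _)
            _ ≤ ν (m + 1) D := hν.face_le m D hD i
    · cases k with
      | zero => exact absurd (fun a b _ => Subsingleton.elim (α := Fin 1) a b) hinj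
      | succ k' =>
        obtain ⟨i, θ', rfl⟩ := eq_σ_comp_of_not_injective θ hinj
        calc ν (k' + 1) (fun a b => D ((σ i ≫ θ').toOrderHom a) ((σ i ≫ θ').toOrderHom b))
            = ν (k' + 1) (fun a b => (fun p q => D (θ'.toOrderHom p) (θ'.toOrderHom q))
                (i.predAbove a) (i.predAbove b)) := rfl
          _ = ν k' (fun p q => D (θ'.toOrderHom p) (θ'.toOrderHom q)) :=
              hν.degen_eq k' _ (hD.pullback _) i
          _ ≤ ν n D := ih k' n (by omega) θ' D hD

lemma nu_comp_le {ν : ∀ n : ℕ, (Fin (n + 1) → Fin (n + 1) → ℝ) → ℝ}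
    (hν : IsDistMatrixNorm ν) {k n : ℕ} (f : Fin (k + 1) →o Fin (n + 1))
    {D : Fin (n + 1) → Fin (n + 1) → ℝ} (hD : IsDistMatrix D) :
    ν k (fun i j => D (f i) (f j)) ≤ ν n D :=
  nu_comp_le_aux hν (k + n) k n le_rfl (SimplexCategory.mkHom f) D hD

lemma wt_comp_le {ν : ∀ n : ℕ, (Fin (n + 1) → Fin (n + 1) → ℝ) → ℝ}
    (hν : IsDistMatrixNorm ν) {X : Type*} [PseudoMetricSpace X] {k n : ℕ}
    (x : Fin (n + 1) → X) (f : Fin (k + 1) →o Fin (n + 1)) :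
    wt ν (x ∘ f) ≤ wt ν x :=
  nu_comp_le hν f (isDistMatrix_dist x)

open Opposite SSet

lemma simplex_eq {n : ℕ} {m : SimplexCategoryᵒᵖ} (α : Δ[n].obj m) :
    Δ[n].map (stdSimplex.objEquiv α).op (stdSimplex.objEquiv.symm (𝟙 _)) = α := by
  apply Equiv.injective stdSimplex.objEquiv
  rw [stdSimplex.map_apply]
  exact Category.comp_id (obj := SimplexCategory) _

lemma map_const_eq {n : ℕ} {m : SimplexCategoryᵒᵖ} (α : Δ[n].obj m)
    (i : Fin (m.unop.len + 1)) :
    Δ[n].map (SimplexCategory.mkHom (OrderHom.const (Fin 1) i)).op α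
      = stdSimplex.const n (stdSimplex.asOrderHom α i) (op ⦋0⦌) := by
  apply stdSimplex.objEquiv.injective
  rw [stdSimplex.map_apply, Equiv.apply_symm_apply]
  apply SimplexCategory.Hom.ext
  apply OrderHom.ext
  funext k
  have : k = 0 := Subsingleton.elim (α := Fin 1) _ _
  subst this
  rfl

/-- The simplicial map `Δ[n] ⟶ VR ν X r` determined by a tuple of vertices. -/
def toVRhom (ν : ∀ n : ℕ, (Fin (n + 1) → Fin (n + 1) → ℝ) → ℝ) {X : Type}
    [PseudoMetricSpace X] (r : ℝ) {n : ℕ} (x : Fin (n + 1) → X)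
    (hx : ∀ (k : ℕ) (f : Fin (k + 1) →o Fin (n + 1)), wt ν (x ∘ f) < r) :
    Δ[n] ⟶ VR ν X r where
  app m := TypeCat.ofHom fun α => ⟨x ∘ stdSimplex.asOrderHom α, fun k h => hx k ((stdSimplex.asOrderHom α).comp h)⟩
  naturality _ _ _ := rfl

end Aux

/-- The `n`-simplices of `VR^ν_{<r} X` are exactly the tuples of `ν`-weight `< r`, and the
quotient map to the Kolmogorov (metric) quotient induces a trivial Kan fibration:
the induced map has the right lifting property with respect to all boundary inclusions
`∂Δ[n] → Δ[n]`. -/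
theorem VRquot_trivialKanFibration (ν : ∀ n : ℕ, (Fin (n + 1) → Fin (n + 1) → ℝ) → ℝ)
    (hν : IsDistMatrixNorm ν) (X : Type) [PseudoMetricSpace X] (r : ℝ) (hr : 0 < r) :
    (∀ (n : ℕ) (x : Fin (n + 1) → X),
      (∀ (k : ℕ) (f : Fin (k + 1) →o Fin (n + 1)), wt ν (x ∘ f) < r) ↔ wt ν x < r) ∧
    ∀ n : ℕ, HasLiftingProperty (SSet.boundary n).ι (VRquot ν X r) := by
  have main1 : ∀ {Y : Type} [PseudoMetricSpace Y] (n : ℕ) (x : Fin (n + 1) → Y),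
      (∀ (k : ℕ) (f : Fin (k + 1) →o Fin (n + 1)), wt ν (x ∘ f) < r) ↔ wt ν x < r := by
    intro Y _ n x
    constructor
    · intro h
      exact h n OrderHom.id
    · intro h k f
      exact lt_of_le_of_lt (wt_comp_le hν x f) h
  refine ⟨fun n x => main1 n x, fun n => ?_⟩
  constructor
  intro f g sq
  constructor
  -- the vertex tuple of `g`
  set y : Fin (n + 1) → SeparationQuotient X :=
    (g.app (Opposite.op (SimplexCategory.mk n)) (SSet.stdSimplex.objEquiv.symm (𝟙 _))).1 with hy
  have g_app : ∀ (m : SimplexCategoryᵒᵖ) (α : Δ[n].obj m),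
      (g.app m α).1 = y ∘ SSet.stdSimplex.asOrderHom α := by
    intro m α
    conv_lhs => rw [← simplex_eq α]
    rw [FunctorToTypes.naturality]
    rfl
  have hywt : wt ν y < r :=
    (g.app (Opposite.op (SimplexCategory.mk n)) (SSet.stdSimplex.objEquiv.symm (𝟙 _))).2 n OrderHom.id
  cases n with
  | zero =>
    obtain ⟨x, hxy⟩ : ∃ x : Fin 1 → X, ∀ j, SeparationQuotient.mk (x j) = y j := by
      choose x hx using fun j => SeparationQuotient.surjective_mk (y j)
      exact ⟨x, hx⟩
    have hdisteq : (fun i j => dist (x i) (x j)) = fun i j => dist (y i) (y j) := by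
      funext i j
      rw [← hxy i, ← hxy j, SeparationQuotient.dist_mk]
    have hwtx : wt ν x < r := by
      unfold wt
      rw [hdisteq]
      exact hywt
    have hxk : ∀ (k : ℕ) (h : Fin (k + 1) →o Fin 1), wt ν (x ∘ h) < r :=
      (main1 0 x).2 hwtx
    refine ⟨⟨toVRhom ν r x hxk, ?_, ?_⟩⟩
    · apply SSet.hom_ext
      intro m
      refine ConcreteCategory.hom_ext _ _ fun v => ?_
      exact absurd (fun b => ⟨0, Subsingleton.elim (α := Fin 1) _ _⟩) v.2
    · apply SSet.hom_ext
      intro m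
      refine ConcreteCategory.hom_ext _ _ fun α => ?_
      apply Subtype.ext
      show (fun i => SeparationQuotient.mk ((x ∘ SSet.stdSimplex.asOrderHom α) i)) = (g.app m α).1
      rw [g_app]
      funext i
      exact hxy (SSet.stdSimplex.asOrderHom α i)
  | succ m =>
    have hns : ∀ j : Fin (m + 2),
        ¬Function.Surjective (SSet.stdSimplex.asOrderHom
          (SSet.stdSimplex.const (m + 1) j (Opposite.op (SimplexCategory.mk 0)))) := by
      intro j hsurj
      obtain ⟨i, hi⟩ := exists_ne j
      obtain ⟨a, ha⟩ := hsurj i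
      exact hi ha.symm
    set x : Fin (m + 2) → X := fun j =>
      (f.app (Opposite.op (SimplexCategory.mk 0))
        ⟨SSet.stdSimplex.const (m + 1) j (Opposite.op (SimplexCategory.mk 0)), hns j⟩).1 0
      with hxdef
    have hxy : ∀ j, SeparationQuotient.mk (x j) = y j := by
      intro j
      have h1 := ConcreteCategory.congr_hom (NatTrans.congr_app sq.w (Opposite.op (SimplexCategory.mk 0)))
        ⟨SSet.stdSimplex.const (m + 1) j (Opposite.op (SimplexCategory.mk 0)), hns j⟩
      have h2 := congr_fun (congr_arg Subtype.val h1) 0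
      refine h2.trans ?_
      have h3 := congr_fun (g_app (Opposite.op (SimplexCategory.mk 0))
        (SSet.stdSimplex.const (m + 1) j (Opposite.op (SimplexCategory.mk 0)))) 0
      exact h3
    have hdisteq : (fun i j => dist (x i) (x j)) = fun i j => dist (y i) (y j) := by
      funext i j
      rw [← hxy i, ← hxy j, SeparationQuotient.dist_mk]
    have hwtx : wt ν x < r := by
      unfold wt
      rw [hdisteq]
      exact hywt
    have hxk : ∀ (k : ℕ) (h : Fin (k + 1) →o Fin (m + 2)), wt ν (x ∘ h) < r :=
      (main1 (m + 1) x).2 hwtx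
    refine ⟨⟨toVRhom ν r x hxk, ?_, ?_⟩⟩
    · apply SSet.hom_ext
      intro mm
      refine ConcreteCategory.hom_ext _ _ fun v => ?_
      obtain ⟨α, hα⟩ := v
      apply Subtype.ext
      funext i
      have hnat := NatTrans.naturality_apply f
        (SimplexCategory.mkHom (OrderHom.const (Fin 1) i)).op ⟨α, hα⟩
      have hv : (∂Δ[m + 1]).toSSet.map (SimplexCategory.mkHom (OrderHom.const (Fin 1) i)).op ⟨α, hα⟩
          = ⟨SSet.stdSimplex.const (m + 1) (SSet.stdSimplex.asOrderHom α i)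
              (Opposite.op (SimplexCategory.mk 0)), hns _⟩ :=
        Subtype.ext (map_const_eq α i)
      rw [hv] at hnat
      exact congr_fun (congr_arg Subtype.val hnat) 0
    · apply SSet.hom_ext
      intro mm
      refine ConcreteCategory.hom_ext _ _ fun α => ?_
      apply Subtype.ext
      show (fun i => SeparationQuotient.mk ((x ∘ SSet.stdSimplex.asOrderHom α) i)) = (g.app mm α).1
      rw [g_app]
      funext i
      exact hxy (SSet.stdSimplex.asOrderHom α i)
end
end
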